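/- arXiv:math/0608716 — 6 statements merged into one kernel-verified Lean document; each statement's English description precedes it below -/
import Mathlib

section
/- Let R > 0, C > 0, and let w : (0, R) → (0, ∞) be a measurable function such that C·w(s) ≤ w(t) whenever 0 < s ≤ t < R. Then for every continuously differentiable function u : [0, R] → ℂ which vanishes on [R', R] for some 0 < R' < R, and for every j ∈ [0, R), one has ∫_j^R (w(θ)/(R·(R − θ)))·|u(θ)|² dθ ≤ (1/C)·∫_0^R w(θ)·|u'(θ)|² dθ, as an inequality of Lebesgue integrals of nonnegative functions (valid in [0, ∞]). -/
open MeasureTheory Set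
open scoped ENNReal

/-!
For `θ < R'` the fundamental theorem of calculus and Cauchy–Schwarz give
`|u θ|² = |u R' - u θ|² ≤ (R' - θ) ∫_θ^{R'} |u'|²`, and quasi-monotonicity moves the weight inside:
`w θ ≤ w t / C` for `t ≥ θ`. Since `R' - θ ≤ R - θ`, this bounds the integrand on the left by the
constant `(1 / (C R)) ∫_0^R w |u'|²`, and integrating over an interval of length `R - j ≤ R` gives
the claim.
-/

theorem sq_lintegral_le_measure_univ_mul_lintegral_sq {α : Type*} [MeasurableSpace α]
    (μ : Measure α) {f : α → ℝ≥0∞} (hf : AEMeasurable f μ) :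
    (∫⁻ a, f a ∂μ) ^ 2 ≤ μ univ * ∫⁻ a, f a ^ 2 ∂μ := by
  have h := ENNReal.lintegral_mul_le_Lp_mul_Lq μ Real.HolderConjugate.two_two hf
    (aemeasurable_const (b := 1))
  simp only [Pi.mul_apply, mul_one, ENNReal.one_rpow, lintegral_const, one_mul] at h
  calc (∫⁻ a, f a ∂μ) ^ 2
      ≤ ((∫⁻ a, f a ^ (2 : ℝ) ∂μ) ^ (1 / 2 : ℝ) * μ univ ^ (1 / 2 : ℝ)) ^ 2 := by gcongr
    _ = μ univ * ∫⁻ a, f a ^ 2 ∂μ := by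
      simp only [mul_pow, ← ENNReal.rpow_natCast, ← ENNReal.rpow_mul]
      norm_num [mul_comm]

theorem enorm_sub_sq_le_mul_lintegral_enorm_deriv_sq {E : Type*} [NormedAddCommGroup E]
    [NormedSpace ℝ E] [CompleteSpace E] {u : ℝ → E} {a b : ℝ} (hu : ContDiffOn ℝ 1 u (Icc a b))
    (hab : a ≤ b) :
    ‖u b - u a‖ₑ ^ 2 ≤ ENNReal.ofReal (b - a) * ∫⁻ t in Icc a b, ‖deriv u t‖ₑ ^ 2 := by
  calc ‖u b - u a‖ₑ ^ 2 ≤ (∫⁻ t in Icc a b, ‖deriv u t‖ₑ) ^ 2 := by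
        gcongr; exact enorm_sub_le_lintegral_deriv_of_contDiffOn_Icc hu hab
    _ ≤ _ := by
        have h := sq_lintegral_le_measure_univ_mul_lintegral_sq (volume.restrict (Icc a b))
          (aestronglyMeasurable_deriv u _).enorm
        rwa [Measure.restrict_apply_univ, Real.volume_Icc] at h

theorem ENNReal.ofReal_mul_norm_sq {E : Type*} [SeminormedAddCommGroup E] (a : ℝ) (x : E) :
    ENNReal.ofReal (a * ‖x‖ ^ 2) = ENNReal.ofReal a * ‖x‖ₑ ^ 2 := by
  rw [ENNReal.ofReal_mul' (sq_nonneg _), ENNReal.ofReal_pow (norm_nonneg _), ofReal_norm]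

theorem ofReal_mul_enorm_sq_le_of_quasiMonotone {E : Type*} [NormedAddCommGroup E]
    [NormedSpace ℝ E] [CompleteSpace E] {w : ℝ → ℝ} {C θ b : ℝ} (hC : 0 < C) (hθb : θ ≤ b)
    (hw : ∀ t ∈ Icc θ b, C * w θ ≤ w t) {u : ℝ → E} (hu : ContDiffOn ℝ 1 u (Icc θ b))
    (hub : u b = 0) :
    ENNReal.ofReal (w θ) * ‖u θ‖ₑ ^ 2 ≤
      ENNReal.ofReal ((b - θ) / C) * ∫⁻ t in Icc θ b, ENNReal.ofReal (w t) * ‖deriv u t‖ₑ ^ 2 := by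
  have hwt : ∀ t ∈ Icc θ b, ENNReal.ofReal (w θ) ≤ ENNReal.ofReal C⁻¹ * ENNReal.ofReal (w t) := by
    intro t ht
    rw [← ENNReal.ofReal_mul (inv_nonneg.2 hC.le)]
    exact ENNReal.ofReal_le_ofReal ((le_inv_mul_iff₀ hC).2 (hw t ht))
  calc ENNReal.ofReal (w θ) * ‖u θ‖ₑ ^ 2
      ≤ ENNReal.ofReal (w θ) * (ENNReal.ofReal (b - θ) * ∫⁻ t in Icc θ b, ‖deriv u t‖ₑ ^ 2) := by
        gcongr
        simpa [hub] using enorm_sub_sq_le_mul_lintegral_enorm_deriv_sq hu hθb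
    _ = ENNReal.ofReal (b - θ) * ∫⁻ t in Icc θ b, ENNReal.ofReal (w θ) * ‖deriv u t‖ₑ ^ 2 := by
        rw [lintegral_const_mul' _ _ ENNReal.ofReal_ne_top]; ring
    _ ≤ ENNReal.ofReal (b - θ) *
          ∫⁻ t in Icc θ b, ENNReal.ofReal C⁻¹ * (ENNReal.ofReal (w t) * ‖deriv u t‖ₑ ^ 2) := by
        gcongr _ * ?_
        refine setLIntegral_mono' measurableSet_Icc fun t ht => ?_
        rw [← mul_assoc]
        exact mul_le_mul_left (hwt t ht) _
    _ = _ := by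
        rw [lintegral_const_mul' _ _ ENNReal.ofReal_ne_top, ← mul_assoc,
          ← ENNReal.ofReal_mul (by linarith), div_eq_mul_inv]

theorem ofReal_div_mul_norm_sq_le_lintegral {E : Type*} [NormedAddCommGroup E]
    [NormedSpace ℝ E] [CompleteSpace E] {R C R' θ : ℝ} (hR : 0 < R) (hC : 0 < C) {w : ℝ → ℝ}
    (hw_mono : ∀ s t : ℝ, 0 < s → s ≤ t → t < R → C * w s ≤ w t) {u : ℝ → E}
    (hu : ContDiffOn ℝ 1 u (Icc 0 R)) (hR'R : R' < R) (hu0 : ∀ t ∈ Icc R' R, u t = 0)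
    (hθ : θ ∈ Ioo 0 R) :
    ENNReal.ofReal (w θ / (R * (R - θ)) * ‖u θ‖ ^ 2) ≤
      ENNReal.ofReal (1 / (C * R)) *
        ∫⁻ t in Ioo 0 R, ENNReal.ofReal (w t * ‖deriv u t‖ ^ 2) := by
  rcases le_or_gt R' θ with hR'θ | hθR'
  · simp [hu0 θ ⟨hR'θ, hθ.2.le⟩]
  have hsub : Icc θ R' ⊆ Ioo 0 R := fun t ht => ⟨hθ.1.trans_le ht.1, ht.2.trans_lt hR'R⟩
  have hθR : 0 < R - θ := sub_pos.2 hθ.2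
  have hbound := ofReal_mul_enorm_sq_le_of_quasiMonotone hC hθR'.le
    (fun t ht => hw_mono θ t hθ.1 ht.1 (ht.2.trans_lt hR'R))
    (hu.mono (hsub.trans Ioo_subset_Icc_self)) (hu0 R' ⟨le_rfl, hR'R.le⟩)
  simp only [ENNReal.ofReal_mul_norm_sq]
  calc ENNReal.ofReal (w θ / (R * (R - θ))) * ‖u θ‖ₑ ^ 2
      = ENNReal.ofReal (1 / (R * (R - θ))) * (ENNReal.ofReal (w θ) * ‖u θ‖ₑ ^ 2) := by
        rw [← mul_assoc, ← ENNReal.ofReal_mul (by positivity), one_div_mul_eq_div]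
    _ ≤ ENNReal.ofReal (1 / (R * (R - θ))) * (ENNReal.ofReal ((R' - θ) / C) *
          ∫⁻ t in Icc θ R', ENNReal.ofReal (w t) * ‖deriv u t‖ₑ ^ 2) :=
        mul_le_mul_right hbound _
    _ = ENNReal.ofReal (1 / (R * (R - θ)) * ((R' - θ) / C)) *
          ∫⁻ t in Icc θ R', ENNReal.ofReal (w t) * ‖deriv u t‖ₑ ^ 2 := by
        rw [ENNReal.ofReal_mul (by positivity), mul_assoc]
    _ ≤ _ := by
        gcongr ?_ * ?_
        · refine ENNReal.ofReal_le_ofReal ?_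
          rw [div_mul_div_comm, one_mul, div_le_div_iff₀ (by positivity) (by positivity)]
          nlinarith [mul_pos hC hR]
        · exact lintegral_mono_set hsub

theorem stmt0_general
    (R C : ℝ) (hR : 0 < R) (hC : 0 < C)
    (w : ℝ → ℝ)
    (hw_mono : ∀ s t : ℝ, 0 < s → s ≤ t → t < R → C * w s ≤ w t)
    (u : ℝ → ℂ) (hu : ContDiffOn ℝ 1 u (Icc 0 R))
    (R' : ℝ) (hR'R : R' < R)
    (hu0 : ∀ t ∈ Icc R' R, u t = 0)
    (j : ℝ) (hj : j ∈ Ico (0 : ℝ) R) :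
    ∫⁻ θ in Ioo j R, ENNReal.ofReal (w θ / (R * (R - θ)) * ‖u θ‖ ^ 2)
      ≤ ENNReal.ofReal (1 / C) *
        ∫⁻ θ in Ioo (0 : ℝ) R, ENNReal.ofReal (w θ * ‖deriv u θ‖ ^ 2) := by
  set I := ∫⁻ θ in Ioo (0 : ℝ) R, ENNReal.ofReal (w θ * ‖deriv u θ‖ ^ 2)
  calc ∫⁻ θ in Ioo j R, ENNReal.ofReal (w θ / (R * (R - θ)) * ‖u θ‖ ^ 2)
      ≤ ∫⁻ _ in Ioo j R, ENNReal.ofReal (1 / (C * R)) * I :=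
        setLIntegral_mono' measurableSet_Ioo fun θ hθ =>
          ofReal_div_mul_norm_sq_le_lintegral hR hC hw_mono hu hR'R hu0
            ⟨hj.1.trans_lt hθ.1, hθ.2⟩
    _ = ENNReal.ofReal (1 / (C * R) * (R - j)) * I := by
        rw [setLIntegral_const, Real.volume_Ioo, ENNReal.ofReal_mul (by positivity)]; ring
    _ ≤ ENNReal.ofReal (1 / C) * I := by
        gcongr
        rw [one_div_mul_eq_div, div_le_div_iff₀ (by positivity) hC]
        nlinarith [hj.1]

/-- A weighted Hardy-type inequality: if the weight `w` on `(0,R)` satisfies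
the quasi-monotonicity condition `C·w(s) ≤ w(t)` for `0 < s ≤ t < R`, then for any `C¹`
function `u` on `[0,R]` vanishing near the right endpoint and any `j ∈ [0,R)`,
`∫_j^R (w θ/(R(R−θ)))·|u θ|² dθ ≤ (1/C)·∫_0^R w θ·|u' θ|² dθ`. -/
theorem stmt0
    (R C : ℝ) (hR : 0 < R) (hC : 0 < C)
    (w : ℝ → ℝ) (hw_meas : Measurable w)
    (hw_pos : ∀ t ∈ Ioo (0 : ℝ) R, 0 < w t)
    (hw_mono : ∀ s t : ℝ, 0 < s → s ≤ t → t < R → C * w s ≤ w t)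
    (u : ℝ → ℂ) (hu : ContDiffOn ℝ 1 u (Icc 0 R))
    (R' : ℝ) (hR'0 : 0 < R') (hR'R : R' < R)
    (hu0 : ∀ t ∈ Icc R' R, u t = 0)
    (j : ℝ) (hj : j ∈ Ico (0 : ℝ) R) :
    ∫⁻ θ in Ioo j R, ENNReal.ofReal (w θ / (R * (R - θ)) * ‖u θ‖ ^ 2)
      ≤ ENNReal.ofReal (1 / C) *
        ∫⁻ θ in Ioo (0 : ℝ) R, ENNReal.ofReal (w θ * ‖deriv u θ‖ ^ 2) :=
  stmt0_general R C hR hC w hw_mono u hu R' hR'R hu0 j hj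
end

section
/- Let R > 0, C > 0, and let w : (0, R) → (0, ∞) be a measurable function such that C·w(s) ≤ w(t) whenever 0 < s ≤ t < R. Then for every continuously differentiable function u : [0, R] → ℂ which vanishes on [R', R] for some 0 < R' < R, and for every j ∈ [0, R), one has ∫_j^R w(θ)·|u(θ)|² dθ ≤ ((R − j)²/C)·∫_j^R w(θ)·|u'(θ)|² dθ, as an inequality of Lebesgue integrals of nonnegative functions (valid in [0, ∞]). -/
open MeasureTheory Set

open scoped ENNReal

section

variable {E : Type*} [NormedAddCommGroup E] [NormedSpace ℝ E] [CompleteSpace E] {u : ℝ → E}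

theorem enorm_sub_le_lintegral_enorm_deriv {U : Set ℝ} {a b : ℝ} (hU : IsOpen U)
    (hu : ContDiffOn ℝ 1 u U) (hab : a ≤ b) (hsub : Icc a b ⊆ U) :
    ‖u b - u a‖ₑ ≤ ∫⁻ t in Ioc a b, ‖deriv u t‖ₑ := by
  have hsub' : uIcc a b ⊆ U := by rwa [uIcc_of_le hab]
  have ftc : ∫ t in a..b, deriv u t = u b - u a :=
    intervalIntegral.integral_eq_sub_of_hasDerivAt
      (fun t ht => ((hu.differentiableOn one_ne_zero).differentiableAt
        (hU.mem_nhds (hsub' ht))).hasDerivAt)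
      ((hu.continuousOn_deriv_of_isOpen hU le_rfl).mono hsub').intervalIntegrable
  rw [← ftc, intervalIntegral.integral_of_le hab]
  exact enorm_integral_le_lintegral_enorm _

theorem enorm_sq_le_mul_lintegral_enorm_deriv_sq {U : Set ℝ} {a b : ℝ} (hU : IsOpen U)
    (hu : ContDiffOn ℝ 1 u U) (hab : a ≤ b) (hsub : Icc a b ⊆ U) (hb : u b = 0) :
    ‖u a‖ₑ ^ 2 ≤ ENNReal.ofReal (b - a) * ∫⁻ t in Ioc a b, ‖deriv u t‖ₑ ^ 2 := by
  have hFTC := enorm_sub_le_lintegral_enorm_deriv hU hu hab hsub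
  rw [hb, zero_sub, enorm_neg] at hFTC
  calc ‖u a‖ₑ ^ 2 ≤ (∫⁻ t in Ioc a b, ‖deriv u t‖ₑ) ^ 2 := by gcongr
    _ ≤ ENNReal.ofReal (b - a) * ∫⁻ t in Ioc a b, ‖deriv u t‖ₑ ^ 2 := by
      simpa only [Measure.restrict_apply_univ, Real.volume_Ioc] using
        sq_lintegral_le_measure_univ_mul_lintegral_sq (volume.restrict (Ioc a b))
          (stronglyMeasurable_deriv u).enorm.aemeasurable

variable {w : ℝ → ℝ} {C R R' j : ℝ}

theorem ofReal_mul_enorm_sq_le_setLIntegral_weighted_deriv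
    (hw_mono : ∀ s t : ℝ, 0 < s → s ≤ t → t < R → C * w s ≤ w t)
    (hu : ContDiffOn ℝ 1 u (Ioo 0 R)) (hR'R : R' < R) (hu0 : ∀ t ∈ Icc R' R, u t = 0)
    (hj : 0 ≤ j) {θ : ℝ} (hθ : θ ∈ Ioo j R) :
    ENNReal.ofReal (C * w θ) * ‖u θ‖ₑ ^ 2
      ≤ ENNReal.ofReal (R - j) * ∫⁻ t in Ioo j R, ENNReal.ofReal (w t) * ‖deriv u t‖ₑ ^ 2 := by
  obtain ⟨hjθ, hθR⟩ := hθ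
  rcases le_or_gt R' θ with hR'θ | hθR'
  · have huθ : u θ = 0 := hu0 θ ⟨hR'θ, hθR.le⟩
    simp [huθ]
  have hθ0 : 0 < θ := hj.trans_lt hjθ
  calc ENNReal.ofReal (C * w θ) * ‖u θ‖ₑ ^ 2
      ≤ ENNReal.ofReal (C * w θ) *
          (ENNReal.ofReal (R' - θ) * ∫⁻ t in Ioc θ R', ‖deriv u t‖ₑ ^ 2) := by
        gcongr
        exact enorm_sq_le_mul_lintegral_enorm_deriv_sq isOpen_Ioo hu hθR'.le
          (Icc_subset_Ioo hθ0 hR'R) (hu0 R' ⟨le_rfl, hR'R.le⟩)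
    _ = ENNReal.ofReal (R' - θ) *
          ∫⁻ t in Ioc θ R', ENNReal.ofReal (C * w θ) * ‖deriv u t‖ₑ ^ 2 := by
        rw [lintegral_const_mul' _ _ ENNReal.ofReal_ne_top]
        ring
    _ ≤ ENNReal.ofReal (R - j) *
          ∫⁻ t in Ioc θ R', ENNReal.ofReal (w t) * ‖deriv u t‖ₑ ^ 2 := by
        gcongr ENNReal.ofReal ?_ * ?_
        · linarith
        refine setLIntegral_mono' measurableSet_Ioc fun t ht => ?_
        gcongr
        exact hw_mono θ t hθ0 ht.1.le (ht.2.trans_lt hR'R)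
    _ ≤ ENNReal.ofReal (R - j) *
          ∫⁻ t in Ioo j R, ENNReal.ofReal (w t) * ‖deriv u t‖ₑ ^ 2 := by
        gcongr
        exact fun t ht => ⟨hjθ.trans ht.1, ht.2.trans_lt hR'R⟩

theorem ofReal_mul_setLIntegral_weighted_enorm_sq_le
    (hw_mono : ∀ s t : ℝ, 0 < s → s ≤ t → t < R → C * w s ≤ w t) (hC : 0 ≤ C)
    (hu : ContDiffOn ℝ 1 u (Ioo 0 R)) (hR'R : R' < R) (hu0 : ∀ t ∈ Icc R' R, u t = 0)
    (hj : 0 ≤ j) (hjR : j ≤ R) :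
    ENNReal.ofReal C * ∫⁻ θ in Ioo j R, ENNReal.ofReal (w θ) * ‖u θ‖ₑ ^ 2
      ≤ ENNReal.ofReal ((R - j) ^ 2) *
          ∫⁻ t in Ioo j R, ENNReal.ofReal (w t) * ‖deriv u t‖ₑ ^ 2 := by
  set I := ∫⁻ t in Ioo j R, ENNReal.ofReal (w t) * ‖deriv u t‖ₑ ^ 2
  rw [← lintegral_const_mul' _ _ ENNReal.ofReal_ne_top]
  calc ∫⁻ θ in Ioo j R, ENNReal.ofReal C * (ENNReal.ofReal (w θ) * ‖u θ‖ₑ ^ 2)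
      ≤ ∫⁻ _ in Ioo j R, ENNReal.ofReal (R - j) * I := by
        refine setLIntegral_mono' measurableSet_Ioo fun θ hθ => ?_
        rw [← mul_assoc, ← ENNReal.ofReal_mul hC]
        exact ofReal_mul_enorm_sq_le_setLIntegral_weighted_deriv hw_mono hu hR'R hu0 hj hθ
    _ = ENNReal.ofReal ((R - j) ^ 2) * I := by
        rw [setLIntegral_const, Real.volume_Ioo, sq, ENNReal.ofReal_mul (by linarith)]
        ring

end

theorem stmt1_general
    (R C : ℝ) (hC : 0 < C)
    (w : ℝ → ℝ)
    (hw_mono : ∀ s t : ℝ, 0 < s → s ≤ t → t < R → C * w s ≤ w t)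
    (u : ℝ → ℂ) (hu : ContDiffOn ℝ 1 u (Icc 0 R))
    (R' : ℝ) (hR'R : R' < R)
    (hu0 : ∀ t ∈ Icc R' R, u t = 0)
    (j : ℝ) (hj : j ∈ Ico (0 : ℝ) R) :
    ∫⁻ θ in Ioo j R, ENNReal.ofReal (w θ * ‖u θ‖ ^ 2)
      ≤ ENNReal.ofReal ((R - j) ^ 2 / C) *
        ∫⁻ θ in Ioo j R, ENNReal.ofReal (w θ * ‖deriv u θ‖ ^ 2) := by
  have hsplit (f : ℝ → ℂ) (θ : ℝ) :
      ENNReal.ofReal (w θ * ‖f θ‖ ^ 2) = ENNReal.ofReal (w θ) * ‖f θ‖ₑ ^ 2 := by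
    rw [ENNReal.ofReal_mul' (sq_nonneg _), ENNReal.ofReal_pow (norm_nonneg _), ofReal_norm]
  have weighted := ofReal_mul_setLIntegral_weighted_enorm_sq_le hw_mono hC.le
    (hu.mono Ioo_subset_Icc_self) hR'R hu0 hj.1 hj.2.le
  simp only [hsplit]
  rw [ENNReal.ofReal_div_of_pos hC, div_eq_mul_inv, mul_right_comm, ← div_eq_mul_inv,
    ENNReal.le_div_iff_mul_le (by simp [hC]) (by simp), mul_comm]
  exact weighted

/-- If the weight `w` on `(0,R)` satisfies the quasi-monotonicity condition
`C·w(s) ≤ w(t)` for `0 < s ≤ t < R`, then for any `C¹` function `u` on `[0,R]` vanishing near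
the right endpoint and any `j ∈ [0,R)`,
`∫_j^R w θ·|u θ|² dθ ≤ ((R−j)²/C)·∫_j^R w θ·|u' θ|² dθ`. -/
theorem stmt1
    (R C : ℝ) (hR : 0 < R) (hC : 0 < C)
    (w : ℝ → ℝ) (hw_meas : Measurable w)
    (hw_pos : ∀ t ∈ Ioo (0 : ℝ) R, 0 < w t)
    (hw_mono : ∀ s t : ℝ, 0 < s → s ≤ t → t < R → C * w s ≤ w t)
    (u : ℝ → ℂ) (hu : ContDiffOn ℝ 1 u (Icc 0 R))
    (R' : ℝ) (hR'0 : 0 < R') (hR'R : R' < R)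
    (hu0 : ∀ t ∈ Icc R' R, u t = 0)
    (j : ℝ) (hj : j ∈ Ico (0 : ℝ) R) :
    ∫⁻ θ in Ioo j R, ENNReal.ofReal (w θ * ‖u θ‖ ^ 2)
      ≤ ENNReal.ofReal ((R - j) ^ 2 / C) *
        ∫⁻ θ in Ioo j R, ENNReal.ofReal (w θ * ‖deriv u θ‖ ^ 2) :=
  stmt1_general R C hC w hw_mono u hu R' hR'R hu0 j hj
end

section
/- Let k ≥ 1 be an integer and ℓ_j > 0 (j ∈ ℕ) with R := ∑_j ℓ_j < ∞, and consider the regular rooted metric tree with branching number k and generation lengths ℓ_j. Let ρ_j ∈ (0, 1) (j ∈ ℕ) and C > 0 satisfy C·k^i·ρ_i ≤ k^j·ρ_j for all integers i ≤ j, let c ≥ 1, and let a_j, b_j : [0, ℓ_j] → (0, ∞) be measurable with ρ_j/c ≤ a_j(t) ≤ c·ρ_j and ρ_j/c ≤ b_j(t) ≤ c·ρ_j for all t. Then for every C¹ tree function u of finite support satisfying the Dirichlet condition u_∅(0) = 0 at the root, and for every j ∈ ℕ: ∑_{words w with |w| > j} ∫_0^{ℓ_{|w|}} |u_w(t)|²·b_{|w|}(t)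 dt ≤ (c²/C)·R(j)²·∑_{all words w} ∫_0^{ℓ_{|w|}} |u_w'(t)|²·a_{|w|}(t) dt, where R(j) := ∑_{i > j} ℓ_i. -/
/-!
On an edge `w` of generation `m`, `u_w(t) = u_w(ℓ_m) - ∫_t^{ℓ_m} u_w'`, and by continuity at
the vertex `‖u_w(ℓ_m)‖²` is the average of `‖u_{w·i}(0)‖²` over the `k` children. Let `S_m(t)`
be the sum of `‖u_w(t)‖²` over the `k^m` edges of generation `m`, and `D_p` the weighted
Dirichlet energy of generation `p`. Splitting with `(x + y)² ≤ (μ + ν)(x²/μ + y²/ν)`,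
`μ = ℓ_m`, `ν = R(m)`, and using Cauchy–Schwarz on each edge, a downward induction from a
generation beyond the support of `u` gives
`S_m(t) ≤ (ℓ_m + R(m)) ∑_{p ≥ m} k^{-(p-m)} (c/ρ_p) D_p`.
Quasi-monotonicity bounds `ρ_m k^{-(p-m)} / ρ_p` by `1/C`, so for `m > j` the weighted mass
`c ρ_m S_m(t)` is at most `c R(j) (c/C) ∑_p D_p`; integrating over the generations `m > j`
contributes the second factor `∑_{m>j} ℓ_m = R(j)`.
-/

open MeasureTheory Set

theorem sq_integral_le_measureReal_mul_integral_sq {α : Type*} [MeasurableSpace α]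
    {μ : Measure α} [IsFiniteMeasure μ] {g : α → ℝ} (hg : Integrable g μ)
    (hg2 : Integrable (fun x => g x ^ 2) μ) :
    (∫ x, g x ∂μ) ^ 2 ≤ μ.real univ * ∫ x, g x ^ 2 ∂μ := by
  have hquad : ∀ r : ℝ, 0 ≤ μ.real univ * (r * r) + (-2 * ∫ x, g x ∂μ) * r + ∫ x, g x ^ 2 ∂μ := by
    intro r
    have hexp : ∫ x, (g x - r) ^ 2 ∂μ
        = μ.real univ * (r * r) + (-2 * ∫ x, g x ∂μ) * r + ∫ x, g x ^ 2 ∂μ := by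
      have : ∀ x, (g x - r) ^ 2 = (g x ^ 2 - (2 * r) * g x) + r ^ 2 := fun x => by ring
      simp_rw [this]
      have hlin : Integrable (fun x => g x ^ 2 - 2 * r * g x) μ := hg2.sub (hg.const_mul _)
      rw [integral_add hlin (integrable_const _), integral_sub hg2 (hg.const_mul _),
        integral_const_mul, integral_const, smul_eq_mul]
      ring
    exact hexp ▸ integral_nonneg fun x => sq_nonneg _
  -- `r ↦ ∫ (g - r)²` is a nonnegative quadratic, so its discriminant is nonpositive.
  have := discrim_le_zero hquad
  rw [discrim] at this
  nlinarith

theorem add_sq_le_mul_add_div {x y μ ν : ℝ} (hμ : 0 < μ) (hν : 0 < ν) :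
    (x + y) ^ 2 ≤ (μ + ν) * (x ^ 2 / μ + y ^ 2 / ν) := by
  have := Finset.sq_sum_div_le_sum_sq_div Finset.univ ![x, y] (g := ![μ, ν])
    (by simp [Fin.forall_fin_two, hμ, hν])
  simp only [Fin.sum_univ_two, Matrix.cons_val_zero, Matrix.cons_val_one] at this
  rwa [div_le_iff₀ (by positivity), mul_comm] at this

theorem le_lintegral_finsetSum {α β : Type*} [MeasurableSpace α] {μ : Measure α} (s : Finset β)
    (f : β → α → ENNReal) : ∑ b ∈ s, ∫⁻ a, f b a ∂μ ≤ ∫⁻ a, ∑ b ∈ s, f b a ∂μ := by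
  classical
  induction s using Finset.induction_on with
  | empty => simp
  | insert b s hb ih =>
    simp only [Finset.sum_insert hb]
    exact (add_le_add_right ih _).trans (le_lintegral_add _ _)

theorem ENNReal.sum_ofReal_mul_le {ι : Type*} (s : Finset ι) {x y : ι → ℝ} {M : ℝ}
    (hx : ∀ i ∈ s, 0 ≤ x i) (hy : ∀ i ∈ s, y i ≤ M) (hM : 0 ≤ M) :
    ∑ i ∈ s, ENNReal.ofReal (x i * y i) ≤ ENNReal.ofReal ((∑ i ∈ s, x i) * M) := by
  rw [Finset.sum_mul, ENNReal.ofReal_sum_of_nonneg fun i hi => mul_nonneg (hx i hi) hM]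
  exact Finset.sum_le_sum fun i hi => ENNReal.ofReal_le_ofReal
    (mul_le_mul_of_nonneg_left (hy i hi) (hx i hi))

section OneEdge

variable {E F : Type*} [NormedAddCommGroup E] [NormedSpace ℝ E] [NormedAddCommGroup F]
  {f : ℝ → E} {a b : ℝ}

theorem ContDiffOn.integrableOn_Ioo_comp_deriv (hf : ContDiffOn ℝ 1 f (Icc a b)) {φ : E → F}
    (hφ : Continuous φ) : IntegrableOn (fun s => φ (deriv f s)) (Ioo a b) := by
  rcases lt_or_ge a b with hab | hab
  · have hcont : ContinuousOn (fun s => φ (derivWithin f (Icc a b) s)) (Icc a b) :=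
      hφ.comp_continuousOn (hf.continuousOn_derivWithin (uniqueDiffOn_Icc hab) le_rfl)
    refine (hcont.integrableOn_Icc.mono_set Ioo_subset_Icc_self).congr_fun (fun s hs => ?_)
      measurableSet_Ioo
    dsimp only
    rw [derivWithin_of_mem_nhds (Icc_mem_nhds hs.1 hs.2)]
  · simp [Ioo_eq_empty_of_le hab]

theorem ContDiffOn.norm_sub_sq_le [CompleteSpace E] (hf : ContDiffOn ℝ 1 f (Icc a b)) {t : ℝ}
    (ht : t ∈ Icc a b) : ‖f b - f t‖ ^ 2 ≤ (b - a) * ∫ s in Ioo a b, ‖deriv f s‖ ^ 2 := by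
  have hsub : Ioo t b ⊆ Ioo a b := Ioo_subset_Ioo_left ht.1
  have hint : IntegrableOn (deriv f) (Ioo t b) :=
    (hf.integrableOn_Ioo_comp_deriv continuous_id).mono_set hsub
  have hint2 : IntegrableOn (fun s => ‖deriv f s‖ ^ 2) (Ioo a b) :=
    hf.integrableOn_Ioo_comp_deriv (continuous_norm.pow 2)
  have hftc : f b - f t = ∫ s in Ioo t b, deriv f s := by
    rw [← integral_Ioc_eq_integral_Ioo, ← intervalIntegral.integral_of_le ht.2]
    refine (intervalIntegral.integral_eq_sub_of_hasDerivAt_of_le ht.2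
      (hf.continuousOn.mono (Icc_subset_Icc_left ht.1)) (fun s hs => ?_)
      (intervalIntegrable_iff_integrableOn_Ioo_of_le ht.2 |>.2 hint)).symm
    have hs' := hsub hs
    exact ((hf.differentiableOn one_ne_zero s (Ioo_subset_Icc_self hs')).differentiableAt
      (Icc_mem_nhds hs'.1 hs'.2)).hasDerivAt
  calc ‖f b - f t‖ ^ 2 ≤ (∫ s in Ioo t b, ‖deriv f s‖) ^ 2 := by
        rw [hftc]; gcongr; exact norm_integral_le_integral_norm _
    _ ≤ (b - t) * ∫ s in Ioo t b, ‖deriv f s‖ ^ 2 := by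
        have := sq_integral_le_measureReal_mul_integral_sq hint.norm (hint2.mono_set hsub)
        simpa [Real.volume_real_Ioo_of_le ht.2] using this
    _ ≤ (b - a) * ∫ s in Ioo a b, ‖deriv f s‖ ^ 2 :=
        mul_le_mul (by linarith [ht.1])
          (setIntegral_mono_set hint2 (ae_of_all _ fun s => by positivity) (ae_of_all _ hsub))
          (integral_nonneg fun s => by positivity) (by linarith [ht.1, ht.2])

theorem ContDiffOn.integrableOn_Ioo_norm_deriv_sq_mul (hf : ContDiffOn ℝ 1 f (Icc a b))
    {w : ℝ → ℝ} (hw : Measurable w) {M : ℝ} (hw0 : ∀ s ∈ Ioo a b, 0 ≤ w s)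
    (hM : ∀ s ∈ Ioo a b, w s ≤ M) :
    IntegrableOn (fun s => ‖deriv f s‖ ^ 2 * w s) (Ioo a b) :=
  (hf.integrableOn_Ioo_comp_deriv (continuous_norm.pow 2)).mul_bdd hw.aestronglyMeasurable
    ((ae_restrict_iff' measurableSet_Ioo).2 (ae_of_all _ fun s hs => by
      rw [Real.norm_of_nonneg (hw0 s hs)]; exact hM s hs))

theorem ContDiffOn.norm_sub_sq_le_of_le_weight [CompleteSpace E] (hf : ContDiffOn ℝ 1 f (Icc a b))
    {w : ℝ → ℝ} {m : ℝ} (hm : 0 < m) (hw : ∀ s ∈ Ioo a b, m ≤ w s)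
    (hint : IntegrableOn (fun s => ‖deriv f s‖ ^ 2 * w s) (Ioo a b)) {t : ℝ} (ht : t ∈ Icc a b) :
    ‖f b - f t‖ ^ 2 ≤ (b - a) * (m⁻¹ * ∫ s in Ioo a b, ‖deriv f s‖ ^ 2 * w s) := by
  refine (hf.norm_sub_sq_le ht).trans (mul_le_mul_of_nonneg_left ?_ (by linarith [ht.1, ht.2]))
  rw [← integral_const_mul]
  refine setIntegral_mono_on (hf.integrableOn_Ioo_comp_deriv (continuous_norm.pow 2))
    (hint.const_mul _) measurableSet_Ioo fun s hs => ?_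
  have : 1 ≤ m⁻¹ * w s := by rw [le_inv_mul_iff₀ hm, mul_one]; exact hw s hs
  nlinarith [sq_nonneg ‖deriv f s‖]

end OneEdge

theorem List.ofFn_snoc {α : Type*} {n : ℕ} (v : Fin n → α) (i : α) :
    List.ofFn (Fin.snoc v i : Fin (n + 1) → α) = List.ofFn v ++ [i] := by
  rw [List.ofFn_succ']
  simp

theorem Fintype.sum_ofFn_succ {α M : Type*} [Fintype α] [AddCommMonoid M] (F : List α → M) (n : ℕ) :
    ∑ v : Fin (n + 1) → α, F (List.ofFn v) = ∑ v : Fin n → α, ∑ i, F (List.ofFn v ++ [i]) := by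
  rw [← (Fin.snocEquiv fun _ => α).sum_comp, Fintype.sum_prod_type, Finset.sum_comm]
  simp only [Fin.snocEquiv, Equiv.coe_fn_mk, List.ofFn_snoc]

theorem ENNReal.tsum_list_eq_tsum_sum_ofFn {α : Type*} [Fintype α] (f : List α → ENNReal) :
    ∑' w, f w = ∑' n, ∑ v : Fin n → α, f (List.ofFn v) := by
  rw [← List.equivSigmaTuple.symm.tsum_eq, ENNReal.tsum_sigma']
  simp [tsum_fintype, List.equivSigmaTuple]

theorem ofReal_sum_range_sum_ofFn_le_tsum {α : Type*} [Fintype α] {f : List α → ℝ}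
    (hf : ∀ w, 0 ≤ f w) (N : ℕ) :
    ENNReal.ofReal (∑ p ∈ Finset.range N, ∑ v : Fin p → α, f (List.ofFn v))
      ≤ ∑' w, ENNReal.ofReal (f w) := by
  rw [ENNReal.tsum_list_eq_tsum_sum_ofFn,
    ENNReal.ofReal_sum_of_nonneg fun p _ => Finset.sum_nonneg fun v _ => hf _]
  refine (Finset.sum_le_sum fun p _ => ?_).trans (ENNReal.sum_le_tsum _)
  rw [ENNReal.ofReal_sum_of_nonneg fun v _ => hf _]

theorem Set.Finite.exists_eq_zero_of_le_length {α β : Type*} [Zero β] {u : List α → β}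
    (hu : {w | u w ≠ 0}.Finite) : ∃ N, ∀ w, N ≤ w.length → u w = 0 := by
  obtain ⟨N, hN⟩ := (hu.image List.length).bddAbove
  exact ⟨N + 1, fun w hw => by_contra fun h => by have := hN ⟨w, h, rfl⟩; omega⟩

-- The paper's `R(j)`.
noncomputable def tailRadius (ℓ : ℕ → ℝ) (j : ℕ) : ℝ := ∑' i, if j < i then ℓ i else 0

section TailRadius

variable {ℓ : ℕ → ℝ}

theorem summable_ite_lt (hℓ : ∀ i, 0 ≤ ℓ i) (hsum : Summable ℓ) (j : ℕ) :
    Summable fun i => if j < i then ℓ i else 0 :=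
  hsum.of_nonneg_of_le (fun i => by split_ifs <;> simp [hℓ i])
    (fun i => by split_ifs <;> simp [hℓ i])

theorem tailRadius_eq_add (hℓ : ∀ i, 0 ≤ ℓ i) (hsum : Summable ℓ) (j : ℕ) :
    tailRadius ℓ j = ℓ (j + 1) + tailRadius ℓ (j + 1) := by
  classical
  rw [tailRadius, (summable_ite_lt hℓ hsum j).tsum_eq_add_tsum_ite (j + 1), if_pos j.lt_succ_self]
  congr 1
  exact tsum_congr fun i => by split_ifs <;> first | rfl | omega

theorem tailRadius_nonneg (hℓ : ∀ i, 0 ≤ ℓ i) (j : ℕ) : 0 ≤ tailRadius ℓ j :=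
  tsum_nonneg fun i => by split_ifs <;> simp [hℓ i]

theorem tailRadius_antitone (hℓ : ∀ i, 0 ≤ ℓ i) (hsum : Summable ℓ) : Antitone (tailRadius ℓ) :=
  antitone_nat_of_succ_le fun j => by
    rw [tailRadius_eq_add hℓ hsum j]; linarith [hℓ (j + 1)]

theorem add_tailRadius_le (hℓ : ∀ i, 0 ≤ ℓ i) (hsum : Summable ℓ) {j m : ℕ} (hjm : j < m) :
    ℓ m + tailRadius ℓ m ≤ tailRadius ℓ j := by
  obtain ⟨n, rfl⟩ : ∃ n, m = n + 1 := ⟨m - 1, by omega⟩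
  rw [← tailRadius_eq_add hℓ hsum]
  exact tailRadius_antitone hℓ hsum (by omega)

theorem ENNReal.tsum_ite_ofReal_eq_ofReal_tailRadius (hℓ : ∀ i, 0 ≤ ℓ i) (hsum : Summable ℓ)
    (j : ℕ) :
    ∑' i, (if j < i then ENNReal.ofReal (ℓ i) else 0) = ENNReal.ofReal (tailRadius ℓ j) := by
  rw [tailRadius, ENNReal.ofReal_tsum_of_nonneg (fun i => by split_ifs <;> simp [hℓ i])
    (summable_ite_lt hℓ hsum j)]
  exact tsum_congr fun i => by split_ifs <;> simp

end TailRadius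

theorem tsum_ite_setLIntegral_le {α : Type*} [Fintype α] {ℓ : ℕ → ℝ} (hℓ : ∀ i, 0 ≤ ℓ i)
    (hsum : Summable ℓ) (g : List α → ℝ → ENNReal) (j : ℕ) {K : ℝ}
    (hK : ∀ m, j < m → ∀ t ∈ Ioo 0 (ℓ m), ∑ v : Fin m → α, g (List.ofFn v) t ≤ ENNReal.ofReal K) :
    ∑' w, (if j < w.length then ∫⁻ t in Ioo 0 (ℓ w.length), g w t else 0)
      ≤ ENNReal.ofReal (tailRadius ℓ j) * ENNReal.ofReal K := by
  rw [ENNReal.tsum_list_eq_tsum_sum_ofFn, ← ENNReal.tsum_ite_ofReal_eq_ofReal_tailRadius hℓ hsum,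
    ← ENNReal.tsum_mul_right]
  refine ENNReal.tsum_le_tsum fun m => ?_
  simp only [List.length_ofFn]
  split_ifs with hjm
  · calc ∑ v : Fin m → α, ∫⁻ t in Ioo 0 (ℓ m), g (List.ofFn v) t
        ≤ ∫⁻ t in Ioo 0 (ℓ m), ∑ v : Fin m → α, g (List.ofFn v) t := le_lintegral_finsetSum _ _
      _ ≤ ∫⁻ t in Ioo 0 (ℓ m), ENNReal.ofReal K :=
        setLIntegral_mono' measurableSet_Ioo (hK m hjm)
      _ = ENNReal.ofReal (ℓ m) * ENNReal.ofReal K := by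
        rw [setLIntegral_const, Real.volume_Ioo, sub_zero, mul_comm]
  · simp

theorem Finset.sum_Ico_pow_sub_mul_eq_add {R : Type*} [CommSemiring R] {m N : ℕ} (hmN : m < N)
    (r : R) (X : ℕ → R) :
    ∑ p ∈ Finset.Ico m N, r ^ (p - m) * X p
      = X m + r * ∑ p ∈ Finset.Ico (m + 1) N, r ^ (p - (m + 1)) * X p := by
  rw [Finset.sum_eq_sum_Ico_succ_bot hmN, Nat.sub_self, pow_zero, one_mul, Finset.mul_sum]
  congr 1
  refine Finset.sum_congr rfl fun p hp => ?_
  rw [← mul_assoc, ← pow_succ', Nat.sub_add_eq, Nat.sub_add_cancel]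
  exact Nat.sub_pos_of_lt (Finset.mem_Ico.1 hp).1

theorem mul_inv_pow_div_le_inv {K C x y : ℝ} (hK : 0 < K) (hC : 0 < C) (hy : 0 < y) {m p : ℕ}
    (hmp : m ≤ p) (h : C * (K ^ m * x) ≤ K ^ p * y) : x * K⁻¹ ^ (p - m) / y ≤ C⁻¹ := by
  have hpow : K ^ p = K ^ (p - m) * K ^ m := by rw [← pow_add, Nat.sub_add_cancel hmp]
  rw [hpow] at h
  rw [inv_pow, div_le_iff₀ hy, ← div_eq_mul_inv, div_le_iff₀ (by positivity)]
  field_simp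
  nlinarith [pow_pos hK m]

theorem mul_sum_Ico_le_sum_range {K C c : ℝ} {ρ X : ℕ → ℝ} (hK : 0 < K) (hC : 0 < C) (hc : 0 ≤ c)
    (hρ : ∀ p, 0 < ρ p) (hX : ∀ p, 0 ≤ X p)
    (hmono : ∀ i j : ℕ, i ≤ j → C * (K ^ i * ρ i) ≤ K ^ j * ρ j) (m N : ℕ) :
    ρ m * ∑ p ∈ Finset.Ico m N, K⁻¹ ^ (p - m) * (c / ρ p * X p)
      ≤ c / C * ∑ p ∈ Finset.range N, X p := by
  calc ρ m * ∑ p ∈ Finset.Ico m N, K⁻¹ ^ (p - m) * (c / ρ p * X p)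
      = ∑ p ∈ Finset.Ico m N, ρ m * K⁻¹ ^ (p - m) / ρ p * (c * X p) := by
        rw [Finset.mul_sum]
        exact Finset.sum_congr rfl fun p _ => by ring
    _ ≤ ∑ p ∈ Finset.Ico m N, C⁻¹ * (c * X p) :=
        Finset.sum_le_sum fun p hp => mul_le_mul_of_nonneg_right
          (mul_inv_pow_div_le_inv hK hC (hρ p) (Finset.mem_Ico.1 hp).1
            (hmono m p (Finset.mem_Ico.1 hp).1)) (mul_nonneg hc (hX p))
    _ ≤ ∑ p ∈ Finset.range N, C⁻¹ * (c * X p) :=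
        Finset.sum_le_sum_of_subset_of_nonneg
          (fun p hp => Finset.mem_range.2 (Finset.mem_Ico.1 hp).2)
          fun p _ _ => mul_nonneg (inv_nonneg.2 hC.le) (mul_nonneg hc (hX p))
    _ = c / C * ∑ p ∈ Finset.range N, X p := by
        rw [Finset.mul_sum]
        exact Finset.sum_congr rfl fun p _ => by ring

section Tree

variable {E : Type*} [NormedAddCommGroup E] {k : ℕ} {ℓ : ℕ → ℝ} {u : List (Fin k) → ℝ → E}

theorem sum_norm_sq_at_vertex (hk : k ≠ 0)
    (hvertex : ∀ (w : List (Fin k)) (i : Fin k), u w (ℓ w.length) = u (w ++ [i]) 0) (m : ℕ) :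
    ∑ v : Fin m → Fin k, ‖u (List.ofFn v) (ℓ m)‖ ^ 2
      = (k : ℝ)⁻¹ * ∑ v : Fin (m + 1) → Fin k, ‖u (List.ofFn v) 0‖ ^ 2 := by
  rw [Fintype.sum_ofFn_succ (fun w => ‖u w 0‖ ^ 2), Finset.mul_sum]
  refine Finset.sum_congr rfl fun v _ => ?_
  have hk' : (k : ℝ) ≠ 0 := Nat.cast_ne_zero.2 hk
  simp only [← hvertex, List.length_ofFn, Finset.sum_const, Finset.card_univ, Fintype.card_fin,
    nsmul_eq_mul, inv_mul_cancel_left₀ hk']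

variable {κ : ℕ → ℝ} {I : List (Fin k) → ℝ}

theorem sum_norm_sq_le_of_succ (hk : k ≠ 0)
    (hvertex : ∀ (w : List (Fin k)) (i : Fin k), u w (ℓ w.length) = u (w ++ [i]) 0)
    (hedge : ∀ w, ∀ t ∈ Icc 0 (ℓ w.length),
      ‖u w (ℓ w.length) - u w t‖ ^ 2 ≤ ℓ w.length * (κ w.length * I w))
    {m : ℕ} (hℓ : 0 < ℓ m) {ν F : ℝ} (hν : 0 < ν)
    (hnext : ∑ v : Fin (m + 1) → Fin k, ‖u (List.ofFn v) 0‖ ^ 2 ≤ ν * F)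
    {t : ℝ} (ht : t ∈ Icc 0 (ℓ m)) :
    ∑ v : Fin m → Fin k, ‖u (List.ofFn v) t‖ ^ 2
      ≤ (ℓ m + ν) * (κ m * ∑ v : Fin m → Fin k, I (List.ofFn v) + (k : ℝ)⁻¹ * F) := by
  calc ∑ v : Fin m → Fin k, ‖u (List.ofFn v) t‖ ^ 2
      ≤ ∑ v : Fin m → Fin k, (ℓ m + ν) * (‖u (List.ofFn v) (ℓ m) - u (List.ofFn v) t‖ ^ 2 / ℓ m
          + ‖u (List.ofFn v) (ℓ m)‖ ^ 2 / ν) := by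
        refine Finset.sum_le_sum fun v _ => le_trans ?_ (add_sq_le_mul_add_div hℓ hν)
        rw [add_comm (‖_ - _‖)]
        gcongr
        exact norm_le_norm_add_norm_sub _ _
    _ = (ℓ m + ν) * (∑ v : Fin m → Fin k, ‖u (List.ofFn v) (ℓ m) - u (List.ofFn v) t‖ ^ 2 / ℓ m
          + (∑ v : Fin m → Fin k, ‖u (List.ofFn v) (ℓ m)‖ ^ 2) / ν) := by
        rw [← Finset.mul_sum, Finset.sum_add_distrib, Finset.sum_div]
    _ ≤ (ℓ m + ν) * (κ m * ∑ v : Fin m → Fin k, I (List.ofFn v) + (k : ℝ)⁻¹ * F) := by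
        gcongr _ * (?_ + ?_)
        · rw [Finset.mul_sum]
          refine Finset.sum_le_sum fun v _ => (div_le_iff₀' hℓ).2 ?_
          simpa using hedge (List.ofFn v) t (by simpa using ht)
        · rw [sum_norm_sq_at_vertex hk hvertex, div_le_iff₀ hν, mul_assoc, mul_comm F]
          gcongr

theorem sum_norm_sq_le_tailRadius (hk : k ≠ 0) (hℓ : ∀ j, 0 < ℓ j) (hsum : Summable ℓ)
    (hvertex : ∀ (w : List (Fin k)) (i : Fin k), u w (ℓ w.length) = u (w ++ [i]) 0)
    (hedge : ∀ w, ∀ t ∈ Icc 0 (ℓ w.length),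
      ‖u w (ℓ w.length) - u w t‖ ^ 2 ≤ ℓ w.length * (κ w.length * I w))
    {N : ℕ} (hN : ∀ w : List (Fin k), N ≤ w.length → u w = 0) (m : ℕ) {t : ℝ}
    (ht : t ∈ Icc 0 (ℓ m)) :
    ∑ v : Fin m → Fin k, ‖u (List.ofFn v) t‖ ^ 2
      ≤ (ℓ m + tailRadius ℓ m) * ∑ p ∈ Finset.Ico m N,
          (k : ℝ)⁻¹ ^ (p - m) * (κ p * ∑ v : Fin p → Fin k, I (List.ofFn v)) := by
  have hℓ0 : ∀ j, 0 ≤ ℓ j := fun j => (hℓ j).le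
  induction hd : N - m generalizing m t with
  | zero =>
    rw [Finset.Ico_eq_empty_of_le (by omega), Finset.sum_empty, mul_zero]
    exact (Finset.sum_eq_zero fun v _ => by simp [hN (List.ofFn v) (by simp; omega)]).le
  | succ d ih =>
    have hnext := ih (m + 1) ⟨le_rfl, hℓ0 _⟩ (by omega)
    rw [← tailRadius_eq_add hℓ0 hsum] at hnext
    rw [Finset.sum_Ico_pow_sub_mul_eq_add (by omega)]
    exact sum_norm_sq_le_of_succ hk hvertex hedge (hℓ m)
      (tailRadius_eq_add hℓ0 hsum m ▸ add_pos_of_pos_of_nonneg (hℓ _) (tailRadius_nonneg hℓ0 _))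
      hnext ht

theorem sum_norm_sq_mul_le (hk : 1 ≤ k) (hℓ : ∀ j, 0 < ℓ j) (hsum : Summable ℓ)
    {ρ : ℕ → ℝ} (hρ : ∀ n, 0 < ρ n) {C c : ℝ} (hC : 0 < C) (hc : 0 < c)
    (hmono : ∀ i j : ℕ, i ≤ j → C * ((k : ℝ) ^ i * ρ i) ≤ (k : ℝ) ^ j * ρ j)
    (hvertex : ∀ (w : List (Fin k)) (i : Fin k), u w (ℓ w.length) = u (w ++ [i]) 0)
    (hI : ∀ w, 0 ≤ I w)
    (hedge : ∀ w, ∀ t ∈ Icc 0 (ℓ w.length),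
      ‖u w (ℓ w.length) - u w t‖ ^ 2 ≤ ℓ w.length * (c / ρ w.length * I w))
    {N : ℕ} (hN : ∀ w : List (Fin k), N ≤ w.length → u w = 0) {j m : ℕ} (hjm : j < m) {t : ℝ}
    (ht : t ∈ Icc 0 (ℓ m)) :
    (∑ v : Fin m → Fin k, ‖u (List.ofFn v) t‖ ^ 2) * (c * ρ m)
      ≤ c * tailRadius ℓ j
        * (c / C * ∑ p ∈ Finset.range N, ∑ v : Fin p → Fin k, I (List.ofFn v)) := by
  have hℓ0 : ∀ i, 0 ≤ ℓ i := fun i => (hℓ i).le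
  have hX : ∀ p, 0 ≤ ∑ v : Fin p → Fin k, I (List.ofFn v) :=
    fun p => Finset.sum_nonneg fun v _ => hI _
  have hS := sum_norm_sq_le_tailRadius (κ := fun n => c / ρ n) (by omega) hℓ hsum hvertex hedge
    hN m ht
  have hF := mul_sum_Ico_le_sum_range (by exact_mod_cast hk) hC hc.le hρ hX hmono m N
  have hT := add_tailRadius_le hℓ0 hsum hjm
  have hD : 0 ≤ c / C * ∑ p ∈ Finset.range N, ∑ v : Fin p → Fin k, I (List.ofFn v) :=
    mul_nonneg (div_nonneg hc.le hC.le) (Finset.sum_nonneg fun p _ => hX p)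
  nlinarith [mul_le_mul_of_nonneg_right hS (mul_pos hc (hρ m)).le,
    mul_le_mul_of_nonneg_left hF (mul_nonneg hc.le (add_nonneg (hℓ0 m) (tailRadius_nonneg hℓ0 m))),
    mul_le_mul_of_nonneg_right hT (mul_nonneg hc.le hD)]

end Tree

theorem stmt2_general (k : ℕ) (hk : 1 ≤ k)
    (ℓ : ℕ → ℝ) (hℓ : ∀ j, 0 < ℓ j) (hsum : Summable ℓ)
    (ρ : ℕ → ℝ) (hρ : ∀ j, ρ j ∈ Ioo (0 : ℝ) 1)
    (C : ℝ) (hC : 0 < C)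
    (hmono : ∀ i j : ℕ, i ≤ j → C * ((k : ℝ) ^ i * ρ i) ≤ (k : ℝ) ^ j * ρ j)
    (c : ℝ) (hc : 1 ≤ c)
    (a b : ℕ → ℝ → ℝ)
    (ha_meas : ∀ j, Measurable (a j))
    (ha : ∀ j, ∀ t ∈ Icc 0 (ℓ j), ρ j / c ≤ a j t ∧ a j t ≤ c * ρ j)
    (hb : ∀ j, ∀ t ∈ Icc 0 (ℓ j), ρ j / c ≤ b j t ∧ b j t ≤ c * ρ j)
    (u : List (Fin k) → ℝ → ℂ)
    (hu_C1 : ∀ w, ContDiffOn ℝ 1 (u w) (Icc 0 (ℓ w.length)))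
    (hu_vertex : ∀ (w : List (Fin k)) (i : Fin k), u w (ℓ w.length) = u (w ++ [i]) 0)
    (hu_fin : {w : List (Fin k) | u w ≠ 0}.Finite)
    (j : ℕ) :
    (∑' w : List (Fin k),
        if j < w.length then
          ∫⁻ t in Ioo 0 (ℓ w.length), ENNReal.ofReal (‖u w t‖ ^ 2 * b w.length t)
        else 0)
      ≤ ENNReal.ofReal (c ^ 2 / C * (∑' i : ℕ, if j < i then ℓ i else 0) ^ 2) *
        ∑' w : List (Fin k),
          ∫⁻ t in Ioo 0 (ℓ w.length),
            ENNReal.ofReal (‖deriv (u w) t‖ ^ 2 * a w.length t) := by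
  have hℓ0 : ∀ i, 0 ≤ ℓ i := fun i => (hℓ i).le
  have hρ0 : ∀ n, 0 < ρ n := fun n => (hρ n).1
  have hc0 : 0 < c := one_pos.trans_le hc
  have ha_lower : ∀ n, ∀ s ∈ Ioo 0 (ℓ n), ρ n / c ≤ a n s :=
    fun n s hs => (ha n s (Ioo_subset_Icc_self hs)).1
  have ha_nonneg : ∀ n, ∀ s ∈ Ioo 0 (ℓ n), 0 ≤ a n s :=
    fun n s hs => (div_pos (hρ0 n) hc0).le.trans (ha_lower n s hs)
  obtain ⟨N, hN⟩ := hu_fin.exists_eq_zero_of_le_length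
  set I : List (Fin k) → ℝ := fun w => ∫ s in Ioo 0 (ℓ w.length), ‖deriv (u w) s‖ ^ 2 * a w.length s
  have hI_int : ∀ w : List (Fin k),
      IntegrableOn (fun s => ‖deriv (u w) s‖ ^ 2 * a w.length s) (Ioo 0 (ℓ w.length)) :=
    fun w => (hu_C1 w).integrableOn_Ioo_norm_deriv_sq_mul (ha_meas _) (ha_nonneg _)
      fun s hs => (ha _ s (Ioo_subset_Icc_self hs)).2
  have hI0 : ∀ w, 0 ≤ I w := fun w => setIntegral_nonneg measurableSet_Ioo fun s hs =>
    mul_nonneg (sq_nonneg _) (ha_nonneg _ s hs)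
  have hedge : ∀ w, ∀ t ∈ Icc 0 (ℓ w.length),
      ‖u w (ℓ w.length) - u w t‖ ^ 2 ≤ ℓ w.length * (c / ρ w.length * I w) := fun w t ht => by
    simpa [inv_div] using
      (hu_C1 w).norm_sub_sq_le_of_le_weight (div_pos (hρ0 _) hc0) (ha_lower _) (hI_int w) ht
  set D := ∑ p ∈ Finset.range N, ∑ v : Fin p → Fin k, I (List.ofFn v)
  calc _ ≤ ENNReal.ofReal (tailRadius ℓ j) * ENNReal.ofReal (c * tailRadius ℓ j * (c / C * D)) :=
        tsum_ite_setLIntegral_le hℓ0 hsum _ j fun m hjm t ht =>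
          (ENNReal.sum_ofReal_mul_le _ (fun _ _ => sq_nonneg _)
            (fun v _ => by simpa using (hb m t (Ioo_subset_Icc_self ht)).2)
            (mul_pos hc0 (hρ0 m)).le).trans <| ENNReal.ofReal_le_ofReal <|
          sum_norm_sq_mul_le hk hℓ hsum hρ0 hC hc0 hmono hu_vertex hI0 hedge hN hjm
            (Ioo_subset_Icc_self ht)
    _ = ENNReal.ofReal (c ^ 2 / C * tailRadius ℓ j ^ 2) * ENNReal.ofReal D := by
        rw [← ENNReal.ofReal_mul (tailRadius_nonneg hℓ0 j), ← ENNReal.ofReal_mul (by positivity)]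
        ring_nf
    _ ≤ _ := mul_le_mul_of_nonneg_left ((ofReal_sum_range_sum_ofFn_le_tsum hI0 N).trans_eq
          (tsum_congr fun w => ofReal_integral_eq_lintegral_ofReal (hI_int w)
            ((ae_restrict_iff' measurableSet_Ioo).2 (ae_of_all _ fun s hs =>
              mul_nonneg (sq_nonneg _) (ha_nonneg _ s hs))))) zero_le

/-- On a regular rooted metric tree with branching number `k` and generation
lengths `ℓ_j` of finite total length, encoded by indexing edges by finite words over `Fin k`:
if the weights `a_j, b_j` are comparable to `ρ_j` and `g·ρ = k^j·ρ_j` is quasi-monotone, then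
for every finitely supported `C¹` tree function `u` vanishing at the root, the weighted
`L²`-mass beyond generation `j` is bounded by `(c²/C)·R(j)²` times the weighted Dirichlet
energy, where `R(j) = ∑_{i>j} ℓ_i`. -/
theorem stmt2 (k : ℕ) (hk : 1 ≤ k)
    (ℓ : ℕ → ℝ) (hℓ : ∀ j, 0 < ℓ j) (hsum : Summable ℓ)
    (ρ : ℕ → ℝ) (hρ : ∀ j, ρ j ∈ Ioo (0 : ℝ) 1)
    (C : ℝ) (hC : 0 < C)
    (hmono : ∀ i j : ℕ, i ≤ j → C * ((k : ℝ) ^ i * ρ i) ≤ (k : ℝ) ^ j * ρ j)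
    (c : ℝ) (hc : 1 ≤ c)
    (a b : ℕ → ℝ → ℝ)
    (ha_meas : ∀ j, Measurable (a j)) (hb_meas : ∀ j, Measurable (b j))
    (ha : ∀ j, ∀ t ∈ Icc 0 (ℓ j), ρ j / c ≤ a j t ∧ a j t ≤ c * ρ j)
    (hb : ∀ j, ∀ t ∈ Icc 0 (ℓ j), ρ j / c ≤ b j t ∧ b j t ≤ c * ρ j)
    (u : List (Fin k) → ℝ → ℂ)
    (hu_C1 : ∀ w, ContDiffOn ℝ 1 (u w) (Icc 0 (ℓ w.length)))
    (hu_vertex : ∀ (w : List (Fin k)) (i : Fin k), u w (ℓ w.length) = u (w ++ [i]) 0)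
    (hu_fin : {w : List (Fin k) | u w ≠ 0}.Finite)
    (hu_root : u [] 0 = 0)
    (j : ℕ) :
    (∑' w : List (Fin k),
        if j < w.length then
          ∫⁻ t in Ioo 0 (ℓ w.length), ENNReal.ofReal (‖u w t‖ ^ 2 * b w.length t)
        else 0)
      ≤ ENNReal.ofReal (c ^ 2 / C * (∑' i : ℕ, if j < i then ℓ i else 0) ^ 2) *
        ∑' w : List (Fin k),
          ∫⁻ t in Ioo 0 (ℓ w.length),
            ENNReal.ofReal (‖deriv (u w) t‖ ^ 2 * a w.length t) :=
  stmt2_general k hk ℓ hℓ hsum ρ hρ C hC hmono c hc a b ha_meas ha hb u hu_C1 hu_vertex hu_fin j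
end

section
/- Let R > 0. Let g : (0, R) → [1, ∞) be nondecreasing and measurable, let ρ : (0, R) → (0, 1) be measurable, and suppose there is C > 0 with C·g(s)ρ(s) ≤ g(t)ρ(t) whenever 0 < s ≤ t < R. Let c ≥ 1 and let α, β : (0, R) → (0, ∞) be measurable with ρ(t)/c ≤ α(t) ≤ c·ρ(t) and ρ(t)/c ≤ β(t) ≤ c·ρ(t) for all t, and let W : (0, R) → ℝ be measurable with W(t) ≥ 1 for all t. Let μ be the measure on (0, R) with density g·β with respect to Lebesgue measure. Then the set of (equivalence classes in L²(μ) of) continuously differentiable functions u : ℝ → ℂ with compact support contained in the open interval (0, R) satisfying ∫_0^R (|u'(t)|²·α(t) + W(t)·|u(t)|²·β(t))·g(t) dt ≤ 1 is totally bounded in L²(μ). -/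
/-!
Put `λ(a) = c / (C g(a) ρ(a))`. Quasi-monotonicity of `g ρ` and the comparability of `α`, `β`
with `ρ` give `λ(a) α g ≥ 1` and `λ(a) W β g ≥ 1` on `(a, R)`, so a function of form energy
at most `1` has `∫_a^R (|u'|² + |u|²) ≤ λ(a)`. Hence `|u(t)|² ≤ ∫_t^R 2 |u| |u'| ≤ λ(t)`, that is
`g β |u|² ≤ c² / C` everywhere, so the `L²(g β)` mass of the unit form ball near the endpoints is
uniformly small. And `|u(t) - u(s)|² ≤ λ(δ) |t - s|` on `[δ, R)`, so on `[δ, R - δ]` the unit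
form ball is uniformly bounded and equicontinuous, hence totally bounded for the sup norm by
Arzelà–Ascoli; sup-close functions are `L²(g β)`-close on `[δ, R - δ]`.
-/

open MeasureTheory Set Metric
open scoped ENNReal BoundedContinuousFunction

theorem totallyBounded_of_forall_exists_map {X : Type*} [PseudoMetricSpace X] {s : Set X}
    (h : ∀ ε > 0, ∃ (Y : Type*) (_ : PseudoMetricSpace Y) (f : s → Y), TotallyBounded (range f) ∧
      ∃ η > 0, ∀ x y : s, dist (f x) (f y) < η → dist (x : X) y < ε) :
    TotallyBounded s := by
  refine totallyBounded_iff.2 fun ε hε => ?_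
  obtain ⟨Y, _, f, hf, η, hη, hfε⟩ := h ε hε
  obtain ⟨t, hts, htfin, hcover⟩ := finite_approx_of_totallyBounded hf η hη
  choose x hx using fun y : t => hts y.2
  have := htfin.to_subtype
  refine ⟨range fun y => (x y : X), finite_range _, fun z hz => ?_⟩
  obtain ⟨y, hy, hzy⟩ := mem_iUnion₂.1 (hcover ⟨⟨z, hz⟩, rfl⟩)
  refine mem_iUnion₂.2 ⟨_, ⟨⟨y, hy⟩, rfl⟩, hfε ⟨z, hz⟩ _ ?_⟩
  rwa [hx]

theorem equicontinuous_of_dist_sq_le {ι X β : Type*} [PseudoMetricSpace X] [PseudoMetricSpace β]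
    {F : ι → X → β} {L : ℝ} (hF : ∀ i x y, dist (F i x) (F i y) ^ 2 ≤ L * dist x y) :
    Equicontinuous F :=
  equicontinuous_of_continuity_modulus (fun r => √(L * r))
    (by simpa using ((continuous_const.mul continuous_id).sqrt.tendsto (0 : ℝ)))
    F fun x y i => Real.le_sqrt_of_sq_le (hF i x y)

theorem totallyBounded_range_restrict_Icc {ι E : Type*} [NormedAddCommGroup E] [ProperSpace E]
    {u : ι → ℝ → E} (hu : ∀ i, Continuous (u i)) {a b M L : ℝ}
    (hM : ∀ i, ∀ t ∈ Icc a b, ‖u i t‖ ≤ M)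
    (hL : ∀ i, ∀ s ∈ Icc a b, ∀ t ∈ Icc a b, dist (u i s) (u i t) ^ 2 ≤ L * dist s t) :
    TotallyBounded (range fun i =>
      BoundedContinuousFunction.mkOfCompact ((⟨u i, hu i⟩ : C(ℝ, E)).restrict (Icc a b))) := by
  set F := fun i =>
    BoundedContinuousFunction.mkOfCompact ((⟨u i, hu i⟩ : C(ℝ, E)).restrict (Icc a b))
  have hF : Equicontinuous fun f : range F => ⇑(f : Icc a b →ᵇ E) := by
    rintro x₀ U hU
    have := equicontinuous_of_dist_sq_le (F := fun i (t : Icc a b) => u i t)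
      (fun i s t => hL i s s.2 t t.2) x₀ U hU
    filter_upwards [this] with x hx
    rintro ⟨_, i, rfl⟩
    exact hx i
  exact (BoundedContinuousFunction.arzela_ascoli (closedBall 0 M) (isCompact_closedBall 0 M)
    (range F) (by rintro _ t ⟨i, rfl⟩; exact mem_closedBall_zero_iff.2 (hM i t t.2)) hF
    ).totallyBounded.subset subset_closure

theorem MeasureTheory.Lp.dist_sq_le_of_lintegral_le {α E : Type*} [MeasurableSpace α]
    [NormedAddCommGroup E] {μ : Measure α} {f g : Lp E 2 μ} {u v : α → E} (hu : f =ᵐ[μ] u)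
    (hv : g =ᵐ[μ] v) {B : ℝ} (hB : 0 ≤ B)
    (h : ∫⁻ x, ENNReal.ofReal (‖u x - v x‖ ^ 2) ∂μ ≤ ENNReal.ofReal B) :
    dist f g ^ 2 ≤ B := by
  have hsq : eLpNorm (⇑f - ⇑g) 2 μ ^ 2 = ∫⁻ x, ENNReal.ofReal (‖u x - v x‖ ^ 2) ∂μ := by
    simp_rw [eLpNorm_congr_ae (hu.sub hv), ENNReal.ofReal_pow (norm_nonneg _), ofReal_norm]
    simpa using eLpNorm_nnreal_pow_eq_lintegral (f := u - v) (μ := μ) (p := 2) two_ne_zero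
  rw [Lp.dist_def, ← ENNReal.toReal_pow, hsq]
  exact ENNReal.toReal_le_of_le_ofReal hB h

theorem setLIntegral_Ioo_le_of_le_of_le {H : ℝ → ℝ≥0∞} {R δ : ℝ} {K M : ℝ≥0∞} (hδ : 0 ≤ δ)
    (htail : ∀ t ∈ Ioo 0 R, H t ≤ K) (hmid : ∀ t ∈ Icc δ (R - δ), H t ≤ M) :
    ∫⁻ t in Ioo 0 R, H t ≤ K * ENNReal.ofReal (2 * δ) + M * ENNReal.ofReal R := by
  set T := Ioo 0 R \ Icc δ (R - δ)
  have hT : volume T ≤ ENNReal.ofReal (2 * δ) := calc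
    volume T ≤ volume (Ioo 0 δ ∪ Ioo (R - δ) R) := by
      refine measure_mono fun t ⟨⟨h0, hR⟩, hmid⟩ => ?_
      by_cases htδ : t < δ
      · exact .inl ⟨h0, htδ⟩
      · exact .inr ⟨lt_of_not_ge fun h => hmid ⟨le_of_not_gt htδ, h⟩, hR⟩
    _ ≤ volume (Ioo 0 δ) + volume (Ioo (R - δ) R) := measure_union_le _ _
    _ = ENNReal.ofReal (2 * δ) := by
      rw [Real.volume_Ioo, Real.volume_Ioo, sub_zero, sub_sub_cancel,
        ← ENNReal.ofReal_add hδ hδ, two_mul]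
  calc ∫⁻ t in Ioo 0 R, H t ≤ ∫⁻ t in T ∪ Icc δ (R - δ), H t :=
        lintegral_mono_set fun t ht => by by_cases h : t ∈ Icc δ (R - δ) <;> simp_all [T]
    _ ≤ (∫⁻ t in T, H t) + ∫⁻ t in Icc δ (R - δ), H t := lintegral_union_le _ _ _
    _ ≤ K * volume T + M * volume (Icc δ (R - δ)) := by
        gcongr
        · exact (setLIntegral_mono measurable_const fun t ht => htail t ht.1).trans_eq
            (setLIntegral_const _ _)
        · exact (setLIntegral_mono measurable_const hmid).trans_eq (setLIntegral_const _ _)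
    _ ≤ K * ENNReal.ofReal (2 * δ) + M * ENNReal.ofReal R := by
        rw [Real.volume_Icc]; gcongr; linarith

theorem lintegral_withDensity_le_of_le_of_le {d F : ℝ → ℝ} {R δ K M : ℝ} (hd : Measurable d)
    (hR : 0 ≤ R) (hδ : 0 ≤ δ) (hK : 0 ≤ K) (hM : 0 ≤ M) (hF : ∀ t, 0 ≤ F t)
    (htail : ∀ t ∈ Ioo 0 R, d t * F t ≤ K) (hmid : ∀ t ∈ Icc δ (R - δ), d t * F t ≤ M) :
    ∫⁻ t, ENNReal.ofReal (F t) ∂(volume.restrict (Ioo 0 R)).withDensity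
      (fun t => ENNReal.ofReal (d t)) ≤ ENNReal.ofReal (2 * δ * K + R * M) := by
  refine (lintegral_withDensity_le_lintegral_mul _ hd.ennreal_ofReal _).trans ?_
  simp only [Pi.mul_apply, ← ENNReal.ofReal_mul' (hF _)]
  refine (setLIntegral_Ioo_le_of_le_of_le hδ (fun t ht => ENNReal.ofReal_le_ofReal (htail t ht))
    (fun t ht => ENNReal.ofReal_le_ofReal (hmid t ht))).trans_eq ?_
  rw [← ENNReal.ofReal_mul hK, ← ENNReal.ofReal_mul hM,
    ← ENNReal.ofReal_add (by positivity) (by positivity)]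
  ring_nf

theorem intervalIntegral_le_of_le_add_mul {ψ e : ℝ → ℝ} {a b r₀ r : ℝ} (hab : a ≤ b)
    (hr₀ : 0 ≤ r₀) (hr : 0 ≤ r) (hψ : ∀ x ∈ Ioo a b, 0 ≤ ψ x)
    (hψe : ∀ x ∈ Ioo a b, ψ x ≤ r₀ + r * e x)
    (he : ∫⁻ x in Ioo a b, ENNReal.ofReal (e x) ≤ 1) :
    ∫ x in a..b, ψ x ≤ r₀ * (b - a) + r := by
  rw [intervalIntegral.integral_of_le hab, integral_Ioc_eq_integral_Ioo]
  have hlint : ∫⁻ x in Ioo a b, ‖ψ x‖ₑ ≤ ENNReal.ofReal (r₀ * (b - a) + r) := calc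
    ∫⁻ x in Ioo a b, ‖ψ x‖ₑ
        ≤ ∫⁻ x in Ioo a b, (ENNReal.ofReal r₀ + ENNReal.ofReal r * ENNReal.ofReal (e x)) := by
      refine setLIntegral_mono' measurableSet_Ioo fun x hx => ?_
      rw [Real.enorm_of_nonneg (hψ x hx), ← ENNReal.ofReal_mul hr]
      exact (ENNReal.ofReal_le_ofReal (hψe x hx)).trans ENNReal.ofReal_add_le
    _ = ENNReal.ofReal r₀ * volume (Ioo a b)
          + ENNReal.ofReal r * ∫⁻ x in Ioo a b, ENNReal.ofReal (e x) := by
      rw [lintegral_add_left measurable_const, setLIntegral_const,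
        lintegral_const_mul' _ _ ENNReal.ofReal_ne_top]
    _ ≤ ENNReal.ofReal r₀ * ENNReal.ofReal (b - a) + ENNReal.ofReal r * 1 := by
      rw [Real.volume_Ioo]; gcongr
    _ = ENNReal.ofReal (r₀ * (b - a) + r) := by
      rw [mul_one, ← ENNReal.ofReal_mul hr₀, ← ENNReal.ofReal_add (by nlinarith) hr]
  have := (enorm_integral_le_lintegral_enorm ψ).trans hlint
  rw [← ofReal_norm] at this
  exact (le_abs_self _).trans ((ENNReal.ofReal_le_ofReal_iff (by nlinarith)).1 this)

section Calculus

variable {E : Type*} [NormedAddCommGroup E]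

theorem norm_sq_le_integral_of_eq_zero [InnerProductSpace ℝ E] {u : ℝ → E}
    (hu : ContDiff ℝ 1 u) {t b : ℝ} (htb : t ≤ b) (hb : u b = 0) :
    ‖u t‖ ^ 2 ≤ ∫ s in t..b, 2 * (‖u s‖ * ‖deriv u s‖) := by
  have hderiv : ∀ s, HasDerivAt (‖u ·‖ ^ 2) (2 * inner ℝ (u s) (deriv u s)) s := fun s =>
    ((hu.differentiable one_ne_zero s).hasDerivAt).norm_sq
  have hcont : Continuous fun s => 2 * inner ℝ (u s) (deriv u s) :=
    continuous_const.mul (hu.continuous.inner (hu.continuous_deriv le_rfl))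
  have hftc := intervalIntegral.integral_eq_sub_of_hasDerivAt (fun s _ => hderiv s)
    (hcont.intervalIntegrable t b)
  rw [hb, norm_zero, zero_pow two_ne_zero, zero_sub] at hftc
  calc ‖u t‖ ^ 2 = ∫ s in t..b, -(2 * inner ℝ (u s) (deriv u s)) := by
        rw [intervalIntegral.integral_neg, hftc, neg_neg]
    _ ≤ ∫ s in t..b, 2 * (‖u s‖ * ‖deriv u s‖) := by
        refine intervalIntegral.integral_mono_on htb (hcont.neg.intervalIntegrable t b)
          ((continuous_const.mul (hu.continuous.norm.mul
            (hu.continuous_deriv le_rfl).norm)).intervalIntegrable t b) fun s _ => ?_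
        have := neg_le_of_abs_le (abs_real_inner_le_norm (u s) (deriv u s))
        linarith

theorem norm_sub_le_integral_norm_deriv [NormedSpace ℝ E] [CompleteSpace E] {u : ℝ → E}
    (hu : ContDiff ℝ 1 u) {s t : ℝ} (hst : s ≤ t) :
    ‖u t - u s‖ ≤ ∫ x in s..t, ‖deriv u x‖ := by
  rw [← intervalIntegral.integral_eq_sub_of_hasDerivAt
    (fun x _ => (hu.differentiable one_ne_zero x).hasDerivAt)
    ((hu.continuous_deriv le_rfl).intervalIntegrable s t)]
  exact intervalIntegral.norm_integral_le_integral_norm hst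

end Calculus

section Energy

variable {R a lam : ℝ} {α β W g : ℝ → ℝ} {u : ℝ → ℂ}

noncomputable def energyDensity (α β W g : ℝ → ℝ) (u : ℝ → ℂ) (t : ℝ) : ℝ :=
  (‖deriv u t‖ ^ 2 * α t + W t * ‖u t‖ ^ 2 * β t) * g t

theorem sq_add_sq_le_mul_energyDensity {w : ℝ} (hα : 1 ≤ lam * (α w * g w))
    (hβ : 1 ≤ lam * (W w * β w * g w)) :
    ‖deriv u w‖ ^ 2 + ‖u w‖ ^ 2 ≤ lam * energyDensity α β W g u w := calc
  ‖deriv u w‖ ^ 2 + ‖u w‖ ^ 2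
      ≤ ‖deriv u w‖ ^ 2 * (lam * (α w * g w)) + ‖u w‖ ^ 2 * (lam * (W w * β w * g w)) := by
    gcongr <;> exact le_mul_of_one_le_right (sq_nonneg _) ‹_›
  _ = lam * energyDensity α β W g u w := by unfold energyDensity; ring

theorem norm_sq_le_of_energy (hu : ContDiff ℝ 1 u) (huR : u R = 0) (hlam : 0 ≤ lam)
    (hcoer : ∀ w ∈ Ioo a R, 1 ≤ lam * (α w * g w) ∧ 1 ≤ lam * (W w * β w * g w))
    (hE : ∫⁻ t in Ioo a R, ENNReal.ofReal (energyDensity α β W g u t) ≤ 1)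
    {t : ℝ} (ht : t ∈ Icc a R) : ‖u t‖ ^ 2 ≤ lam := by
  have hsub : Ioo t R ⊆ Ioo a R := Ioo_subset_Ioo_left ht.1
  calc ‖u t‖ ^ 2 ≤ ∫ s in t..R, 2 * (‖u s‖ * ‖deriv u s‖) :=
        norm_sq_le_integral_of_eq_zero hu ht.2 huR
    _ ≤ 0 * (R - t) + lam := by
        refine intervalIntegral_le_of_le_add_mul ht.2 le_rfl hlam (fun s _ => by positivity)
          (fun s hs => ?_) ((lintegral_mono_set hsub).trans hE)
        obtain ⟨h1, h2⟩ := hcoer s (hsub hs)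
        have := sq_add_sq_le_mul_energyDensity (u := u) h1 h2
        nlinarith [two_mul_le_add_sq ‖u s‖ ‖deriv u s‖]
    _ = lam := by ring

theorem dist_sq_le_of_energy (hu : ContDiff ℝ 1 u) (hlam : 0 < lam)
    (hcoer : ∀ w ∈ Ioo a R, 1 ≤ lam * (α w * g w) ∧ 1 ≤ lam * (W w * β w * g w))
    (hE : ∫⁻ t in Ioo a R, ENNReal.ofReal (energyDensity α β W g u t) ≤ 1)
    {s t : ℝ} (hs : s ∈ Icc a R) (ht : t ∈ Icc a R) : dist (u s) (u t) ^ 2 ≤ lam * dist s t := by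
  wlog hst : s ≤ t generalizing s t
  · rw [dist_comm, dist_comm s]; exact this ht hs (le_of_not_ge hst)
  rw [dist_comm, dist_eq_norm, Real.dist_eq, abs_of_nonpos (sub_nonpos.2 hst), neg_sub]
  obtain hx | hx := (norm_nonneg (u t - u s)).eq_or_lt
  · rw [← hx]; nlinarith
  set x := ‖u t - u s‖
  have hsub : Ioo s t ⊆ Ioo a R := Ioo_subset_Ioo hs.1 ht.2
  have key : x ≤ lam / (2 * x) * (t - s) + x / 2 := calc
    x ≤ ∫ w in s..t, ‖deriv u w‖ := norm_sub_le_integral_norm_deriv hu hst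
    _ ≤ lam / (2 * x) * (t - s) + x / 2 := by
      refine intervalIntegral_le_of_le_add_mul hst (by positivity) (by positivity)
        (fun w _ => norm_nonneg _) (fun w hw => ?_) ((lintegral_mono_set hsub).trans hE)
      obtain ⟨h1, h2⟩ := hcoer w (hsub hw)
      have := sq_add_sq_le_mul_energyDensity (u := u) h1 h2
      set y := ‖deriv u w‖
      set e := energyDensity α β W g u w
      -- Young's inequality `y ≤ lam / (2x) + x y² / (2 lam)`: the weight `x / lam` is the one
      -- that turns the integrated bound into `x² ≤ lam (t - s)`
      have hyoung : lam / (2 * x) + x / 2 * e - y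
          = ((lam - x * y) ^ 2 + x ^ 2 * (lam * e - y ^ 2)) / (2 * x * lam) := by
        field_simp; ring
      have : 0 ≤ ((lam - x * y) ^ 2 + x ^ 2 * (lam * e - y ^ 2)) / (2 * x * lam) := by
        have : 0 ≤ lam * e - y ^ 2 := by nlinarith [sq_nonneg ‖u w‖]
        positivity
      linarith
  have hcancel : 2 * x * (lam / (2 * x) * (t - s)) = lam * (t - s) := by field_simp
  nlinarith

end Energy

section Weights

variable {R C c : ℝ} {g ρ α β W : ℝ → ℝ}

theorem coercive_of_quasiMonotone (hg_one : ∀ t ∈ Ioo (0 : ℝ) R, 1 ≤ g t)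
    (hρ : ∀ t ∈ Ioo (0 : ℝ) R, ρ t ∈ Ioo (0 : ℝ) 1) (hC : 0 < C)
    (hmono : ∀ s t : ℝ, 0 < s → s ≤ t → t < R → C * (g s * ρ s) ≤ g t * ρ t) (hc : 0 < c)
    (hα : ∀ t ∈ Ioo (0 : ℝ) R, ρ t / c ≤ α t ∧ α t ≤ c * ρ t)
    (hβ : ∀ t ∈ Ioo (0 : ℝ) R, ρ t / c ≤ β t ∧ β t ≤ c * ρ t)
    (hW : ∀ t ∈ Ioo (0 : ℝ) R, 1 ≤ W t) {a : ℝ} (ha : a ∈ Ioo 0 R) :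
    0 < c / (C * (g a * ρ a)) ∧ ∀ w ∈ Ioo a R, 1 ≤ c / (C * (g a * ρ a)) * (α w * g w) ∧
      1 ≤ c / (C * (g a * ρ a)) * (W w * β w * g w) := by
  have hgρa : 0 < C * (g a * ρ a) :=
    mul_pos hC (mul_pos (one_pos.trans_le (hg_one a ha)) (hρ a ha).1)
  refine ⟨div_pos hc hgρa, fun w hw => ?_⟩
  have hw0 : w ∈ Ioo 0 R := ⟨ha.1.trans hw.1, hw.2⟩
  have hg0 : 0 ≤ g w := zero_le_one.trans (hg_one w hw0)
  have hαw : ρ w * g w ≤ c * (α w * g w) := by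
    rw [← mul_assoc]; gcongr; exact (div_le_iff₀' hc).1 (hα w hw0).1
  have hβw : ρ w * g w ≤ c * (W w * β w * g w) := by
    rw [← mul_assoc]; gcongr
    calc ρ w ≤ c * β w := (div_le_iff₀' hc).1 (hβ w hw0).1
      _ ≤ c * (W w * β w) := by
        have hβ0 : 0 ≤ β w := (div_pos (hρ w hw0).1 hc).le.trans (hβ w hw0).1
        gcongr
        exact le_mul_of_one_le_left hβ0 (hW w hw0)
  have hm := hmono a w ha.1 hw.1.le hw.2
  simp only [div_mul_eq_mul_div, one_le_div hgρa]
  constructor <;> linarith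

theorem density_le (hg_one : ∀ t ∈ Ioo (0 : ℝ) R, 1 ≤ g t)
    (hβ : ∀ t ∈ Ioo (0 : ℝ) R, ρ t / c ≤ β t ∧ β t ≤ c * ρ t) {t : ℝ} (ht : t ∈ Ioo 0 R) :
    g t * β t ≤ c * (g t * ρ t) := by
  rw [mul_left_comm]
  exact mul_le_mul_of_nonneg_left (hβ t ht).2 (zero_le_one.trans (hg_one t ht))

theorem density_mul_norm_sub_sq_le (hg_one : ∀ t ∈ Ioo (0 : ℝ) R, 1 ≤ g t)
    (hρ : ∀ t ∈ Ioo (0 : ℝ) R, ρ t ∈ Ioo (0 : ℝ) 1)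
    (hβ : ∀ t ∈ Ioo (0 : ℝ) R, ρ t / c ≤ β t ∧ β t ≤ c * ρ t) (hc : 0 ≤ c)
    {t : ℝ} (ht : t ∈ Ioo 0 R) {p q : ℂ} (hp : ‖p‖ ^ 2 ≤ c / (C * (g t * ρ t)))
    (hq : ‖q‖ ^ 2 ≤ c / (C * (g t * ρ t))) :
    g t * β t * ‖p - q‖ ^ 2 ≤ 4 * c ^ 2 / C := by
  have hg : 0 < g t := one_pos.trans_le (hg_one t ht)
  have hρt : 0 < ρ t := (hρ t ht).1
  have hpq : ‖p - q‖ ^ 2 ≤ 2 * (‖p‖ ^ 2 + ‖q‖ ^ 2) :=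
    (pow_le_pow_left₀ (norm_nonneg _) (norm_sub_le p q) 2).trans add_sq_le
  calc g t * β t * ‖p - q‖ ^ 2 ≤ c * (g t * ρ t) * (2 * (‖p‖ ^ 2 + ‖q‖ ^ 2)) :=
        mul_le_mul (density_le hg_one hβ ht) hpq (sq_nonneg _) (by positivity)
    _ ≤ c * (g t * ρ t) * (2 * (c / (C * (g t * ρ t)) + c / (C * (g t * ρ t)))) := by gcongr
    _ = 4 * c ^ 2 / C := by field_simp; ring

theorem density_le_of_le (hg_one : ∀ t ∈ Ioo (0 : ℝ) R, 1 ≤ g t)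
    (hβ : ∀ t ∈ Ioo (0 : ℝ) R, ρ t / c ≤ β t ∧ β t ≤ c * ρ t) (hC : 0 < C)
    (hmono : ∀ s t : ℝ, 0 < s → s ≤ t → t < R → C * (g s * ρ s) ≤ g t * ρ t) (hc : 0 ≤ c)
    {t b : ℝ} (ht : 0 < t) (htb : t ≤ b) (hb : b < R) :
    g t * β t ≤ c * (g b * ρ b) / C := by
  rw [le_div_iff₀ hC]
  calc g t * β t * C ≤ c * (g t * ρ t) * C :=
        mul_le_mul_of_nonneg_right (density_le hg_one hβ ⟨ht, htb.trans_lt hb⟩) hC.le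
    _ = c * (C * (g t * ρ t)) := by ring
    _ ≤ c * (g b * ρ b) := mul_le_mul_of_nonneg_left (hmono t b ht htb hb) hc

theorem dist_sq_le_of_norm_sq_le (hR : 0 < R) (hg_meas : Measurable g)
    (hg_one : ∀ t ∈ Ioo (0 : ℝ) R, 1 ≤ g t) (hρ : ∀ t ∈ Ioo (0 : ℝ) R, ρ t ∈ Ioo (0 : ℝ) 1)
    (hC : 0 < C) (hmono : ∀ s t : ℝ, 0 < s → s ≤ t → t < R → C * (g s * ρ s) ≤ g t * ρ t)
    (hc : 0 < c) (hβ_meas : Measurable β)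
    (hβ : ∀ t ∈ Ioo (0 : ℝ) R, ρ t / c ≤ β t ∧ β t ≤ c * ρ t)
    {f f' : Lp ℂ 2 ((volume.restrict (Ioo 0 R)).withDensity fun t => ENNReal.ofReal (g t * β t))}
    {u v : ℝ → ℂ} (hfu : f =ᵐ[(volume.restrict (Ioo 0 R)).withDensity
      fun t => ENNReal.ofReal (g t * β t)] u)
    (hfv : f' =ᵐ[(volume.restrict (Ioo 0 R)).withDensity fun t => ENNReal.ofReal (g t * β t)] v)
    (hu : ∀ t ∈ Ioo 0 R, ‖u t‖ ^ 2 ≤ c / (C * (g t * ρ t)))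
    (hv : ∀ t ∈ Ioo 0 R, ‖v t‖ ^ 2 ≤ c / (C * (g t * ρ t))) {δ η : ℝ} (hδ : 0 < δ) (hδR : δ < R)
    (hη : 0 ≤ η) (hmid : ∀ t ∈ Icc δ (R - δ), ‖u t - v t‖ ^ 2 ≤ η) :
    dist f f' ^ 2 ≤ 8 * c ^ 2 / C * δ + R * (c * (g (R - δ) * ρ (R - δ)) / C) * η := by
  have hRδ : R - δ ∈ Ioo 0 R := ⟨by linarith, by linarith⟩
  have hG : 0 < c * (g (R - δ) * ρ (R - δ)) / C :=
    div_pos (mul_pos hc (mul_pos (one_pos.trans_le (hg_one _ hRδ)) (hρ _ hRδ).1)) hC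
  have htail (t : ℝ) (ht : t ∈ Ioo 0 R) : g t * β t * ‖u t - v t‖ ^ 2 ≤ 4 * c ^ 2 / C :=
    density_mul_norm_sub_sq_le hg_one hρ hβ hc.le ht (hu t ht) (hv t ht)
  have hmid' (t : ℝ) (ht : t ∈ Icc δ (R - δ)) :
      g t * β t * ‖u t - v t‖ ^ 2 ≤ c * (g (R - δ) * ρ (R - δ)) / C * η :=
    mul_le_mul (density_le_of_le hg_one hβ hC hmono hc.le (hδ.trans_le ht.1) ht.2 hRδ.2)
      (hmid t ht) (sq_nonneg _) hG.le
  refine (Lp.dist_sq_le_of_lintegral_le hfu hfv (by positivity)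
    (lintegral_withDensity_le_of_le_of_le (hg_meas.mul hβ_meas) hR.le hδ.le (by positivity)
      (by positivity) (fun t => sq_nonneg _) htail hmid')).trans_eq ?_
  ring

end Weights

theorem stmt3_general (R : ℝ) (hR : 0 < R)
    (g : ℝ → ℝ) (hg_meas : Measurable g)
    (hg_one : ∀ t ∈ Ioo (0 : ℝ) R, 1 ≤ g t)
    (ρ : ℝ → ℝ)
    (hρ : ∀ t ∈ Ioo (0 : ℝ) R, ρ t ∈ Ioo (0 : ℝ) 1)
    (C : ℝ) (hC : 0 < C)
    (hmono : ∀ s t : ℝ, 0 < s → s ≤ t → t < R → C * (g s * ρ s) ≤ g t * ρ t)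
    (c : ℝ) (hc : 1 ≤ c)
    (α β : ℝ → ℝ) (hβ_meas : Measurable β)
    (hα : ∀ t ∈ Ioo (0 : ℝ) R, ρ t / c ≤ α t ∧ α t ≤ c * ρ t)
    (hβ : ∀ t ∈ Ioo (0 : ℝ) R, ρ t / c ≤ β t ∧ β t ≤ c * ρ t)
    (W : ℝ → ℝ) (hW : ∀ t ∈ Ioo (0 : ℝ) R, 1 ≤ W t) :
    TotallyBounded
      { f : Lp ℂ 2 ((volume.restrict (Ioo (0 : ℝ) R)).withDensity
            fun t => ENNReal.ofReal (g t * β t)) |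
        ∃ u : ℝ → ℂ, ContDiff ℝ 1 u ∧ tsupport u ⊆ Ioo (0 : ℝ) R ∧
          (f : ℝ → ℂ) =ᵐ[(volume.restrict (Ioo (0 : ℝ) R)).withDensity
              fun t => ENNReal.ofReal (g t * β t)] u ∧
          ∫⁻ t in Ioo (0 : ℝ) R,
              ENNReal.ofReal ((‖deriv u t‖ ^ 2 * α t + W t * ‖u t‖ ^ 2 * β t) * g t) ≤ 1 } := by
  have hc0 : 0 < c := one_pos.trans_le hc
  have hcoer {a : ℝ} (ha : a ∈ Ioo 0 R) :=
    coercive_of_quasiMonotone hg_one hρ hC hmono hc0 hα hβ hW ha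
  set S := {f : Lp ℂ 2 _ | _}
  choose u hu hsupp hae hE using fun x : S => x.2
  have hE' (x : S) {a : ℝ} (ha : a ∈ Ioo 0 R) :=
    (lintegral_mono_set (Ioo_subset_Ioo_left ha.1.le)).trans (hE x)
  have hbound (x : S) {a : ℝ} (ha : a ∈ Ioo 0 R) {t : ℝ} (ht : t ∈ Icc a R) :
      ‖u x t‖ ^ 2 ≤ c / (C * (g a * ρ a)) :=
    norm_sq_le_of_energy (hu x) (image_eq_zero_of_notMem_tsupport fun h => (hsupp x h).2.false)
      (hcoer ha).1.le (hcoer ha).2 (hE' x ha) ht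
  refine totallyBounded_of_forall_exists_map fun ε hε => ?_
  obtain ⟨δ', hδ', hδ'ε⟩ := exists_pos_mul_lt (half_pos (pow_pos hε 2)) (8 * c ^ 2 / C)
  obtain ⟨δ, hδ, hδR, hδε⟩ : ∃ δ > 0, δ < R ∧ 8 * c ^ 2 / C * δ < ε ^ 2 / 2 :=
    ⟨min δ' (R / 2), lt_min hδ' (half_pos hR), (min_le_right _ _).trans_lt (half_lt_self hR),
      (mul_le_mul_of_nonneg_left (min_le_left _ _) (by positivity)).trans_lt hδ'ε⟩
  obtain ⟨η, hη, hηε⟩ := exists_pos_mul_lt (half_pos (pow_pos hε 2))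
    (R * (c * (g (R - δ) * ρ (R - δ)) / C))
  have hδI : δ ∈ Ioo 0 R := ⟨hδ, hδR⟩
  have hsub : Icc δ (R - δ) ⊆ Icc δ R := Icc_subset_Icc_right (by linarith)
  have hrestrict := totallyBounded_range_restrict_Icc (fun x => (hu x).continuous)
    (fun x t ht => Real.le_sqrt_of_sq_le (hbound x hδI (hsub ht)))
    (fun x s hs t ht => dist_sq_le_of_energy (hu x) (hcoer hδI).1 (hcoer hδI).2 (hE' x hδI)
      (hsub hs) (hsub ht))
  refine ⟨_, _, _, hrestrict, √η, Real.sqrt_pos.2 hη, fun x y hxy => ?_⟩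
  have hmid (t : ℝ) (ht : t ∈ Icc δ (R - δ)) : ‖u x t - u y t‖ ^ 2 ≤ η := by
    rw [← dist_eq_norm]
    exact ((Real.lt_sqrt dist_nonneg).1
      ((BoundedContinuousFunction.dist_coe_le_dist ⟨t, ht⟩).trans_lt hxy)).le
  refine lt_of_pow_lt_pow_left₀ 2 hε.le ((dist_sq_le_of_norm_sq_le hR hg_meas hg_one hρ hC hmono
    hc0 hβ_meas hβ (hae x) (hae y) (fun t ht => hbound x ht ⟨le_rfl, ht.2.le⟩)
    (fun t ht => hbound y ht ⟨le_rfl, ht.2.le⟩) hδ hδR hη.le hmid).trans_lt ?_)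
  linear_combination hδε + hηε

/-- On `(0,R)` with a nondecreasing branch-counting weight `g ≥ 1`, a
weight `ρ ∈ (0,1)` such that `g·ρ` is quasi-monotone, weights `α, β` comparable with `ρ`,
and a potential `W ≥ 1`, the set of (classes in `L²(g·β dt)` of) smooth compactly supported
functions in `(0,R)` with form energy `∫ (|u'|²·α + W·|u|²·β)·g dt ≤ 1` is totally bounded
in `L²(g·β dt)`. -/
theorem stmt3 (R : ℝ) (hR : 0 < R)
    (g : ℝ → ℝ) (hg_meas : Measurable g)
    (hg_mono : ∀ s t : ℝ, 0 < s → s ≤ t → t < R → g s ≤ g t)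
    (hg_one : ∀ t ∈ Ioo (0 : ℝ) R, 1 ≤ g t)
    (ρ : ℝ → ℝ) (hρ_meas : Measurable ρ)
    (hρ : ∀ t ∈ Ioo (0 : ℝ) R, ρ t ∈ Ioo (0 : ℝ) 1)
    (C : ℝ) (hC : 0 < C)
    (hmono : ∀ s t : ℝ, 0 < s → s ≤ t → t < R → C * (g s * ρ s) ≤ g t * ρ t)
    (c : ℝ) (hc : 1 ≤ c)
    (α β : ℝ → ℝ) (hα_meas : Measurable α) (hβ_meas : Measurable β)
    (hα : ∀ t ∈ Ioo (0 : ℝ) R, ρ t / c ≤ α t ∧ α t ≤ c * ρ t)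
    (hβ : ∀ t ∈ Ioo (0 : ℝ) R, ρ t / c ≤ β t ∧ β t ≤ c * ρ t)
    (W : ℝ → ℝ) (hW_meas : Measurable W) (hW : ∀ t ∈ Ioo (0 : ℝ) R, 1 ≤ W t) :
    TotallyBounded
      { f : Lp ℂ 2 ((volume.restrict (Ioo (0 : ℝ) R)).withDensity
            fun t => ENNReal.ofReal (g t * β t)) |
        ∃ u : ℝ → ℂ, ContDiff ℝ 1 u ∧ tsupport u ⊆ Ioo (0 : ℝ) R ∧
          (f : ℝ → ℂ) =ᵐ[(volume.restrict (Ioo (0 : ℝ) R)).withDensity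
              fun t => ENNReal.ofReal (g t * β t)] u ∧
          ∫⁻ t in Ioo (0 : ℝ) R,
              ENNReal.ofReal ((‖deriv u t‖ ^ 2 * α t + W t * ‖u t‖ ^ 2 * β t) * g t) ≤ 1 } :=
  stmt3_general R hR g hg_meas hg_one ρ hρ C hC hmono c hc α β hβ_meas hα hβ W hW
end

section
/- Let d ≥ 1 be an integer, let Ω ⊆ ℝ^d be a Lebesgue-measurable set, let R̂ > 0 and C > 0, and let J : Ω × (0, R̂) → (0, ∞) be measurable with J(s, θ₁) ≤ C·J(s, θ₂) for every s ∈ Ω and all 0 < θ₁ ≤ θ₂ < R̂. Let v : Ω × (0, R̂) → ℝ be continuous, continuously differentiable in the variable θ with ∂v/∂θ continuous on Ω × (0, R̂), and suppose there is R' < R̂ such that v(s, θ) = 0 whenever θ ≥ R'. Then for every θ_j ∈ [0, R̂): ∫_Ω ∫_{θ_j}^{R̂} (v(s, θ)²/(C²·R̂·(R̂ − θ)))·J(s, θ) dθ ds ≤ (1/C)·∫_Ω ∫_0^{R̂} (∂v/∂θ(s, θ))²·J(s, θ) dθ ds, as an inequality in [0, ∞] for integrals with respect to Lebesgue measure. 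-/
/-!
For fixed `s`, the fundamental theorem of calculus and Cauchy–Schwarz on `[θ, R']` give
`v(s,θ)² ≤ (R̂ - θ) ∫_θ^{R'} (∂_θ v)²`, which cancels the singular factor `R̂ - θ`. The
quasi-monotonicity `J(s,θ) ≤ C J(s,t)` for `θ ≤ t` then moves the weight under the integral,
and integrating the resulting bound, uniform in `θ`, over an interval of length at most `R̂`
produces the constant `1 / C`.
-/

open MeasureTheory Set
open scoped ENNReal

theorem lintegral_sq_le_measure_univ_mul {α : Type*} [MeasurableSpace α] {μ : Measure α}
    {f : α → ℝ≥0∞} (hf : AEMeasurable f μ) :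
    (∫⁻ x, f x ∂μ) ^ 2 ≤ μ univ * ∫⁻ x, f x ^ 2 ∂μ := by
  have h := ENNReal.lintegral_mul_le_Lp_mul_Lq μ Real.HolderConjugate.two_two hf
    (aemeasurable_const (b := (1 : ℝ≥0∞)))
  simp only [Pi.mul_apply, mul_one, ENNReal.one_rpow, lintegral_const, one_mul] at h
  calc (∫⁻ x, f x ∂μ) ^ 2
      ≤ ((∫⁻ x, f x ^ (2 : ℝ) ∂μ) ^ (1 / 2 : ℝ) * μ univ ^ (1 / 2 : ℝ)) ^ (2 : ℝ) := by
        rw [ENNReal.rpow_two]; gcongr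
    _ = μ univ * ∫⁻ x, f x ^ 2 ∂μ := by
        rw [ENNReal.mul_rpow_of_nonneg _ _ zero_le_two, ← ENNReal.rpow_mul, ← ENNReal.rpow_mul]
        simp [mul_comm]

theorem ofReal_sq_le_mul_lintegral_deriv_sq {f : ℝ → ℝ} {a b : ℝ} (hab : a ≤ b)
    (hf : ∀ x ∈ Icc a b, DifferentiableAt ℝ f x) (hf' : ContinuousOn (deriv f) (Icc a b))
    (hfb : f b = 0) :
    ENNReal.ofReal (f a ^ 2) ≤
      ENNReal.ofReal (b - a) * ∫⁻ t in Ioc a b, ENNReal.ofReal (deriv f t ^ 2) := by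
  have ofReal_sq (x : ℝ) : ENNReal.ofReal (x ^ 2) = ‖x‖ₑ ^ 2 := by
    rw [Real.enorm_eq_ofReal_abs, ← ENNReal.ofReal_pow (abs_nonneg _), sq_abs]
  have hftc : ∫ t in Ioc a b, deriv f t = -f a := by
    rw [← intervalIntegral.integral_of_le hab, intervalIntegral.integral_deriv_eq_sub
      (by rwa [uIcc_of_le hab]) ((hf'.mono (by rw [uIcc_of_le hab])).intervalIntegrable),
      hfb, zero_sub]
  have hmeas : AEMeasurable (fun t => ‖deriv f t‖ₑ) (volume.restrict (Ioc a b)) :=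
    ((hf'.mono Ioc_subset_Icc_self).aemeasurable measurableSet_Ioc).enorm
  simp only [ofReal_sq]
  calc ‖f a‖ₑ ^ 2 = ‖∫ t in Ioc a b, deriv f t‖ₑ ^ 2 := by rw [hftc, enorm_neg]
    _ ≤ (∫⁻ t in Ioc a b, ‖deriv f t‖ₑ) ^ 2 := by
        gcongr; exact enorm_integral_le_lintegral_enorm _
    _ ≤ _ := by simpa using lintegral_sq_le_measure_univ_mul hmeas

theorem ofReal_mul_setLIntegral_sq_le {α : Type*} [MeasurableSpace α] {μ : Measure α}
    {S : Set α} (hS : MeasurableSet S) {g J : α → ℝ} {c C : ℝ} (hC : 0 ≤ C)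
    (hJ : ∀ t ∈ S, c ≤ C * J t) :
    ENNReal.ofReal c * ∫⁻ t in S, ENNReal.ofReal (g t ^ 2) ∂μ ≤
      ENNReal.ofReal C * ∫⁻ t in S, ENNReal.ofReal (g t ^ 2 * J t) ∂μ := by
  rw [← lintegral_const_mul' _ _ ENNReal.ofReal_ne_top,
    ← lintegral_const_mul' _ _ ENNReal.ofReal_ne_top]
  refine setLIntegral_mono' hS fun t ht => ?_
  rw [← ENNReal.ofReal_mul' (sq_nonneg _), ← ENNReal.ofReal_mul hC]
  exact ENNReal.ofReal_le_ofReal (by nlinarith [hJ t ht, sq_nonneg (g t)])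

section WeightedHardy

variable {f J : ℝ → ℝ} {R R' C : ℝ}

theorem ofReal_sq_div_mul_le_lintegral_deriv_sq (hC : 0 < C) (hR' : R' < R)
    (hJ : ∀ θ₁ θ₂ : ℝ, 0 < θ₁ → θ₁ ≤ θ₂ → θ₂ < R → J θ₁ ≤ C * J θ₂)
    (hf : ∀ θ ∈ Ioo (0 : ℝ) R, DifferentiableAt ℝ f θ)
    (hf' : ContinuousOn (deriv f) (Ioo (0 : ℝ) R)) (hf0 : ∀ θ, R' ≤ θ → f θ = 0)
    {θ : ℝ} (hθ : θ ∈ Ioo (0 : ℝ) R) :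
    ENNReal.ofReal (f θ ^ 2 / (C ^ 2 * R * (R - θ)) * J θ) ≤
      ENNReal.ofReal (1 / (C * R)) *
        ∫⁻ t in Ioo (0 : ℝ) R, ENNReal.ofReal (deriv f t ^ 2 * J t) := by
  obtain hθR' | hθR' := le_or_gt R' θ
  · simp [hf0 θ hθR']
  have hsub : Icc θ R' ⊆ Ioo 0 R := Icc_subset_Ioo hθ.1 hR'
  have hRθ : 0 < R - θ := sub_pos.2 hθ.2
  have hR : 0 < R := hθ.1.trans hθ.2
  set L := ∫⁻ t in Ioc θ R', ENNReal.ofReal (deriv f t ^ 2)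
  have hpoincare : ENNReal.ofReal (f θ ^ 2) ≤ ENNReal.ofReal (R - θ) * L :=
    (ofReal_sq_le_mul_lintegral_deriv_sq hθR'.le (fun x hx => hf x (hsub hx))
      (hf'.mono hsub) (hf0 R' le_rfl)).trans (by gcongr)
  have hweight : ENNReal.ofReal (J θ) * L ≤
      ENNReal.ofReal C * ∫⁻ t in Ioo (0 : ℝ) R, ENNReal.ofReal (deriv f t ^ 2 * J t) :=
    (ofReal_mul_setLIntegral_sq_le measurableSet_Ioc hC.le fun t ht =>
      hJ θ t hθ.1 ht.1.le (ht.2.trans_lt hR')).trans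
      (by gcongr; exact Ioc_subset_Icc_self.trans hsub)
  calc ENNReal.ofReal (f θ ^ 2 / (C ^ 2 * R * (R - θ)) * J θ)
      = ENNReal.ofReal (f θ ^ 2) * ENNReal.ofReal (1 / (C ^ 2 * R * (R - θ))) *
          ENNReal.ofReal (J θ) := by
        rw [← ENNReal.ofReal_mul (sq_nonneg _), ← ENNReal.ofReal_mul (by positivity), mul_one_div]
    _ ≤ ENNReal.ofReal (R - θ) * L * ENNReal.ofReal (1 / (C ^ 2 * R * (R - θ))) *
          ENNReal.ofReal (J θ) := by gcongr
    _ = ENNReal.ofReal (1 / (C ^ 2 * R)) * (ENNReal.ofReal (J θ) * L) := by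
        have hcancel : (R - θ) * (1 / (C ^ 2 * R * (R - θ))) = 1 / (C ^ 2 * R) := by
          field_simp
        rw [mul_right_comm _ L, ← ENNReal.ofReal_mul hRθ.le, hcancel]
        ring
    _ ≤ ENNReal.ofReal (1 / (C ^ 2 * R)) * (ENNReal.ofReal C *
          ∫⁻ t in Ioo (0 : ℝ) R, ENNReal.ofReal (deriv f t ^ 2 * J t)) := by gcongr
    _ = _ := by
        rw [← mul_assoc, ← ENNReal.ofReal_mul (by positivity)]
        congr 2
        field_simp

theorem setLIntegral_ofReal_sq_div_mul_le (hC : 0 < C) (hR' : R' < R)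
    (hJ : ∀ θ₁ θ₂ : ℝ, 0 < θ₁ → θ₁ ≤ θ₂ → θ₂ < R → J θ₁ ≤ C * J θ₂)
    (hf : ∀ θ ∈ Ioo (0 : ℝ) R, DifferentiableAt ℝ f θ)
    (hf' : ContinuousOn (deriv f) (Ioo (0 : ℝ) R)) (hf0 : ∀ θ, R' ≤ θ → f θ = 0)
    {θj : ℝ} (hθj : θj ∈ Ico 0 R) :
    ∫⁻ θ in Ioo θj R, ENNReal.ofReal (f θ ^ 2 / (C ^ 2 * R * (R - θ)) * J θ) ≤
      ENNReal.ofReal (1 / C) *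
        ∫⁻ t in Ioo (0 : ℝ) R, ENNReal.ofReal (deriv f t ^ 2 * J t) := by
  set A := ∫⁻ t in Ioo (0 : ℝ) R, ENNReal.ofReal (deriv f t ^ 2 * J t)
  have hR : 0 < R := hθj.1.trans_lt hθj.2
  calc ∫⁻ θ in Ioo θj R, ENNReal.ofReal (f θ ^ 2 / (C ^ 2 * R * (R - θ)) * J θ)
      ≤ ∫⁻ _ in Ioo θj R, ENNReal.ofReal (1 / (C * R)) * A :=
        setLIntegral_mono' measurableSet_Ioo fun θ hθ =>
          ofReal_sq_div_mul_le_lintegral_deriv_sq hC hR' hJ hf hf' hf0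
            ⟨hθj.1.trans_lt hθ.1, hθ.2⟩
    _ ≤ ENNReal.ofReal (1 / (C * R)) * A * volume (Ioo 0 R) := by
        rw [setLIntegral_const]
        gcongr
        exact hθj.1
    _ = ENNReal.ofReal (1 / C) * A := by
        rw [Real.volume_Ioo, sub_zero, mul_right_comm, ← ENNReal.ofReal_mul (by positivity)]
        field_simp

end WeightedHardy

theorem stmt5_general (d : ℕ)
    (Ω : Set (Fin d → ℝ)) (hΩ : MeasurableSet Ω)
    (Rhat C : ℝ) (hC : 0 < C)
    (J : (Fin d → ℝ) → ℝ → ℝ)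
    (hJ_mono : ∀ s ∈ Ω, ∀ θ₁ θ₂ : ℝ, 0 < θ₁ → θ₁ ≤ θ₂ → θ₂ < Rhat →
      J s θ₁ ≤ C * J s θ₂)
    (v : (Fin d → ℝ) → ℝ → ℝ)
    (hv_diff : ∀ s ∈ Ω, ∀ θ ∈ Ioo (0 : ℝ) Rhat, DifferentiableAt ℝ (v s) θ)
    (hv'_cont : ContinuousOn (fun p : (Fin d → ℝ) × ℝ => deriv (v p.1) p.2)
      (Ω ×ˢ Ioo (0 : ℝ) Rhat))
    (R' : ℝ) (hR' : R' < Rhat)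
    (hv0 : ∀ s ∈ Ω, ∀ θ : ℝ, R' ≤ θ → v s θ = 0)
    (θj : ℝ) (hθj : θj ∈ Ico (0 : ℝ) Rhat) :
    (∫⁻ s in Ω, ∫⁻ θ in Ioo θj Rhat,
        ENNReal.ofReal (v s θ ^ 2 / (C ^ 2 * Rhat * (Rhat - θ)) * J s θ))
      ≤ ENNReal.ofReal (1 / C) *
        ∫⁻ s in Ω, ∫⁻ θ in Ioo (0 : ℝ) Rhat,
          ENNReal.ofReal (deriv (v s) θ ^ 2 * J s θ) := by
  rw [← lintegral_const_mul' _ _ ENNReal.ofReal_ne_top]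
  refine setLIntegral_mono' hΩ fun s hs => ?_
  have hv'_slice : ContinuousOn (deriv (v s)) (Ioo (0 : ℝ) Rhat) :=
    hv'_cont.comp (Continuous.prodMk_right s).continuousOn fun θ hθ => ⟨hs, hθ⟩
  exact setLIntegral_ofReal_sq_div_mul_le hC hR' (hJ_mono s hs) (hv_diff s hs) hv'_slice
    (hv0 s hs) hθj

/-- On the straightened cylinder `Ω × (0, R̂)` with a Jacobian weight `J`
satisfying `J(s,θ₁) ≤ C·J(s,θ₂)` for `θ₁ ≤ θ₂`, and a function `v` vanishing for `θ ≥ R'`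
which is continuous and continuously differentiable in `θ`, one has for every `θ_j ∈ [0,R̂)`:
`∫_Ω ∫_{θ_j}^{R̂} (v²/(C²·R̂·(R̂−θ)))·J dθ ds ≤ (1/C)·∫_Ω ∫_0^{R̂} (∂v/∂θ)²·J dθ ds`. -/
theorem stmt5 (d : ℕ) (hd : 1 ≤ d)
    (Ω : Set (Fin d → ℝ)) (hΩ : MeasurableSet Ω)
    (Rhat C : ℝ) (hRhat : 0 < Rhat) (hC : 0 < C)
    (J : (Fin d → ℝ) → ℝ → ℝ)
    (hJ_meas : Measurable fun p : (Fin d → ℝ) × ℝ => J p.1 p.2)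
    (hJ_pos : ∀ s ∈ Ω, ∀ θ ∈ Ioo (0 : ℝ) Rhat, 0 < J s θ)
    (hJ_mono : ∀ s ∈ Ω, ∀ θ₁ θ₂ : ℝ, 0 < θ₁ → θ₁ ≤ θ₂ → θ₂ < Rhat →
      J s θ₁ ≤ C * J s θ₂)
    (v : (Fin d → ℝ) → ℝ → ℝ)
    (hv_cont : ContinuousOn (fun p : (Fin d → ℝ) × ℝ => v p.1 p.2) (Ω ×ˢ Ioo (0 : ℝ) Rhat))
    (hv_diff : ∀ s ∈ Ω, ∀ θ ∈ Ioo (0 : ℝ) Rhat, DifferentiableAt ℝ (v s) θ)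
    (hv'_cont : ContinuousOn (fun p : (Fin d → ℝ) × ℝ => deriv (v p.1) p.2)
      (Ω ×ˢ Ioo (0 : ℝ) Rhat))
    (R' : ℝ) (hR' : R' < Rhat)
    (hv0 : ∀ s ∈ Ω, ∀ θ : ℝ, R' ≤ θ → v s θ = 0)
    (θj : ℝ) (hθj : θj ∈ Ico (0 : ℝ) Rhat) :
    (∫⁻ s in Ω, ∫⁻ θ in Ioo θj Rhat,
        ENNReal.ofReal (v s θ ^ 2 / (C ^ 2 * Rhat * (Rhat - θ)) * J s θ))
      ≤ ENNReal.ofReal (1 / C) *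
        ∫⁻ s in Ω, ∫⁻ θ in Ioo (0 : ℝ) Rhat,
          ENNReal.ofReal (deriv (v s) θ ^ 2 * J s θ) :=
  stmt5_general d Ω hΩ Rhat C hC J hJ_mono v hv_diff hv'_cont R' hR' hv0 θj hθj
end

section
/- Consider a star graph with k+1 edges with lengths ℓ_e > 0 and weights ρ_e > 0 (e ∈ {0,…,k}). There exists β > 0, depending only on k, (ℓ_e) and (ρ_e), such that for every δ ∈ (0, 1], every f ∈ ℂ^{k+1}, and every family g = (g_e) of continuously differentiable functions g_e : [0, δℓ_e] → ℂ with a common value g_0(0) = g_1(0) = ⋯ = g_k(0) and with g_e(δℓ_e) = f_e for all e, one has ∑_{e=0}^k ρ_e ∫_0^{δℓ_e} |g_e'(t)|² dt ≥ δ^{−1}·β·|f⌞1⃗|². -/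
open MeasureTheory Set

/-! On each edge, the fundamental theorem of calculus and Cauchy–Schwarz give
`‖g_e(δℓ_e) − g_e(0)‖² ≤ δℓ_e ∫ ‖g_e'‖²`. Writing `c` for the common vertex value and
`β = min_e ρ_e / ℓ_e`, the weighted energy is therefore at least `δ⁻¹ β ∑_e ‖f_e − c‖²`, and this
dominates `δ⁻¹ β ‖f⌞1⃗‖²` because the mean of the `f_e` minimises `∑_e ‖f_e − c‖²` over `c`. -/

/-- The component of `f ∈ ℂ^{k+1}` orthogonal to `1⃗ = (k+1)^{-1/2}(1,…,1)`:
`f⌞1⃗ = f − ⟨f,1⃗⟩·1⃗`, i.e. `(f⌞1⃗)_i = f_i − (∑_j f_j)/(k+1)`. -/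
noncomputable def perpOne {m : ℕ} (f : Fin m → ℂ) : Fin m → ℂ :=
  fun i => f i - (∑ j, f j) / (m : ℂ)

lemma sum_norm_sq_le_sum_norm_add_sq {ι E : Type*} [Fintype ι] [NormedAddCommGroup E]
    [InnerProductSpace ℝ E] (x : ι → E) (hx : ∑ i, x i = 0) (y : E) :
    ∑ i, ‖x i‖ ^ 2 ≤ ∑ i, ‖x i + y‖ ^ 2 := by
  have hcross : ∑ i, inner ℝ (x i) y = 0 := by rw [← sum_inner, hx, inner_zero_left]
  simp_rw [norm_add_sq_real, Finset.sum_add_distrib, ← Finset.mul_sum, hcross]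
  have : 0 ≤ ∑ _i : ι, ‖y‖ ^ 2 := by positivity
  linarith

lemma sum_perpOne {m : ℕ} (f : Fin m → ℂ) : ∑ i, perpOne f i = 0 := by
  rcases Nat.eq_zero_or_pos m with rfl | hm
  · simp
  simp only [perpOne, Finset.sum_sub_distrib, Finset.sum_const, Finset.card_univ,
    Fintype.card_fin, nsmul_eq_mul]
  rw [mul_div_cancel₀ _ (Nat.cast_ne_zero.2 hm.ne'), sub_self]

lemma sum_norm_perpOne_sq_le {m : ℕ} (f : Fin m → ℂ) (c : ℂ) :
    ∑ i, ‖perpOne f i‖ ^ 2 ≤ ∑ i, ‖f i - c‖ ^ 2 := by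
  convert sum_norm_sq_le_sum_norm_add_sq _ (sum_perpOne f) ((∑ j, f j) / m - c) using 3
  simp only [perpOne, sub_add_sub_cancel]

lemma sq_intervalIntegral_le_mul_intervalIntegral_sq {a b : ℝ} (hab : a ≤ b) {φ : ℝ → ℝ}
    (hφ : IntervalIntegrable φ volume a b)
    (hφ2 : IntervalIntegrable (fun t => φ t ^ 2) volume a b) :
    (∫ t in a..b, φ t) ^ 2 ≤ (b - a) * ∫ t in a..b, φ t ^ 2 := by
  -- `∫ (φ - x)² ≥ 0` for every `x`, so the discriminant of this quadratic in `x` is `≤ 0`.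
  have hquad : ∀ x : ℝ, 0 ≤ (b - a) * (x * x) + (-2 * ∫ t in a..b, φ t) * x +
      ∫ t in a..b, φ t ^ 2 := by
    intro x
    have hpt : ∀ t, 2 * x * φ t - x ^ 2 ≤ φ t ^ 2 := fun t => by nlinarith [sq_nonneg (φ t - x)]
    have := intervalIntegral.integral_mono_on hab
      ((hφ.const_mul (2 * x)).sub intervalIntegrable_const) hφ2 fun t _ => hpt t
    rw [intervalIntegral.integral_sub (hφ.const_mul _) intervalIntegrable_const,
      intervalIntegral.integral_const_mul, intervalIntegral.integral_const, smul_eq_mul] at this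
    linarith
  have := discrim_le_zero hquad
  rw [discrim] at this
  linarith

lemma norm_sub_sq_le_mul_integral_norm_deriv_sq {E : Type*} [NormedAddCommGroup E]
    [NormedSpace ℝ E] [CompleteSpace E] {a b : ℝ} (hab : a ≤ b) {g : ℝ → E}
    (hg : ContDiffOn ℝ 1 g (Icc a b)) :
    ‖g b - g a‖ ^ 2 ≤ (b - a) * ∫ t in a..b, ‖deriv g t‖ ^ 2 := by
  rcases hab.eq_or_lt with rfl | hab
  · simp
  -- `deriv g` may be junk at the endpoints, so we work with the derivative within `[a, b]`.
  set D := derivWithin g (Icc a b)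
  have hIcc : uIcc a b = Icc a b := uIcc_of_le hab.le
  have hD : ContinuousOn D (uIcc a b) :=
    hIcc ▸ hg.continuousOn_derivWithin (uniqueDiffOn_Icc hab) le_rfl
  have hderiv : ∀ x ∈ Ioo a b, HasDerivAt g (D x) x := fun x hx =>
    ((hg.differentiableOn one_ne_zero x (Ioo_subset_Icc_self hx)).hasDerivWithinAt).hasDerivAt
      (Icc_mem_nhds hx.1 hx.2)
  have hftc : ∫ t in a..b, D t = g b - g a :=
    intervalIntegral.integral_eq_sub_of_hasDeriv_right_of_le hab.le hg.continuousOn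
      (fun x hx => (hderiv x hx).hasDerivWithinAt) hD.intervalIntegrable
  have henergy : ∫ t in a..b, ‖deriv g t‖ ^ 2 = ∫ t in a..b, ‖D t‖ ^ 2 :=
    intervalIntegral.integral_congr_Ioo_of_le hab.le fun x hx => by rw [(hderiv x hx).deriv]
  calc ‖g b - g a‖ ^ 2 ≤ (∫ t in a..b, ‖D t‖) ^ 2 := by
        gcongr
        rw [← hftc]
        exact intervalIntegral.norm_integral_le_integral_norm hab.le
    _ ≤ (b - a) * ∫ t in a..b, ‖deriv g t‖ ^ 2 := henergy ▸
        sq_intervalIntegral_le_mul_intervalIntegral_sq hab.le hD.norm.intervalIntegrable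
          (hD.norm.pow 2).intervalIntegrable

theorem stmt6_general (k : ℕ)
    (ℓ ρ : Fin (k + 1) → ℝ) (hℓ : ∀ e, 0 < ℓ e) (hρ : ∀ e, 0 < ρ e) :
    ∃ β : ℝ, 0 < β ∧
      ∀ δ : ℝ, δ ∈ Ioc (0 : ℝ) 1 → ∀ f : Fin (k + 1) → ℂ,
        ∀ g : Fin (k + 1) → ℝ → ℂ,
          (∀ e, ContDiffOn ℝ 1 (g e) (Icc 0 (δ * ℓ e))) →
          (∀ e e', g e 0 = g e' 0) →
          (∀ e, g e (δ * ℓ e) = f e) →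
          δ⁻¹ * β * (∑ i, ‖perpOne f i‖ ^ 2) ≤
            ∑ e, ρ e * ∫ t in (0 : ℝ)..(δ * ℓ e), ‖deriv (g e) t‖ ^ 2 := by
  set β := Finset.univ.inf' Finset.univ_nonempty fun e => ρ e / ℓ e
  have hβ : 0 < β := (Finset.lt_inf'_iff _).2 fun e _ => div_pos (hρ e) (hℓ e)
  refine ⟨β, hβ, ?_⟩
  rintro δ ⟨hδ, -⟩ f g hg hvertex hend
  have hedge : ∀ e, δ⁻¹ * β * ‖f e - g 0 0‖ ^ 2 ≤
      ρ e * ∫ t in (0 : ℝ)..(δ * ℓ e), ‖deriv (g e) t‖ ^ 2 := by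
    intro e
    have hL : 0 < δ * ℓ e := mul_pos hδ (hℓ e)
    have henergy := norm_sub_sq_le_mul_integral_norm_deriv_sq hL.le (hg e)
    rw [hend e, hvertex e 0, sub_zero] at henergy
    calc δ⁻¹ * β * ‖f e - g 0 0‖ ^ 2 ≤ δ⁻¹ * (ρ e / ℓ e) * ‖f e - g 0 0‖ ^ 2 := by
          gcongr
          exact Finset.inf'_le _ (Finset.mem_univ e)
      _ ≤ δ⁻¹ * (ρ e / ℓ e) * ((δ * ℓ e) * ∫ t in (0 : ℝ)..(δ * ℓ e), ‖deriv (g e) t‖ ^ 2) :=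
          mul_le_mul_of_nonneg_left henergy
            (mul_nonneg (inv_nonneg.2 hδ.le) (div_pos (hρ e) (hℓ e)).le)
      _ = ρ e * ∫ t in (0 : ℝ)..(δ * ℓ e), ‖deriv (g e) t‖ ^ 2 := by
          field_simp [hδ.ne', (hℓ e).ne']
  calc δ⁻¹ * β * ∑ i, ‖perpOne f i‖ ^ 2 ≤ δ⁻¹ * β * ∑ i, ‖f i - g 0 0‖ ^ 2 :=
        mul_le_mul_of_nonneg_left (sum_norm_perpOne_sq_le f _) (by positivity)
    _ = ∑ e, δ⁻¹ * β * ‖f e - g 0 0‖ ^ 2 := Finset.mul_sum _ _ _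
    _ ≤ _ := Finset.sum_le_sum fun e _ => hedge e

/-- On a star graph with `k+1` edges of lengths `ℓ_e` and weights `ρ_e`,
there is `β > 0` such that for every scaling `δ ∈ (0,1]`, every boundary datum `f` and every
`C¹` star function `g` on the `δ`-scaled star with `g_e(δℓ_e) = f_e`,
`∑_e ρ_e ∫_0^{δℓ_e} |g_e'|² ≥ δ⁻¹·β·|f⌞1⃗|²`. -/
theorem stmt6 (k : ℕ) (hk : 1 ≤ k)
    (ℓ ρ : Fin (k + 1) → ℝ) (hℓ : ∀ e, 0 < ℓ e) (hρ : ∀ e, 0 < ρ e) :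
    ∃ β : ℝ, 0 < β ∧
      ∀ δ : ℝ, δ ∈ Ioc (0 : ℝ) 1 → ∀ f : Fin (k + 1) → ℂ,
        ∀ g : Fin (k + 1) → ℝ → ℂ,
          (∀ e, ContDiffOn ℝ 1 (g e) (Icc 0 (δ * ℓ e))) →
          (∀ e e', g e 0 = g e' 0) →
          (∀ e, g e (δ * ℓ e) = f e) →
          δ⁻¹ * β * (∑ i, ‖perpOne f i‖ ^ 2) ≤
            ∑ e, ρ e * ∫ t in (0 : ℝ)..(δ * ℓ e), ‖deriv (g e) t‖ ^ 2 :=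
  stmt6_general k ℓ ρ hℓ hρ
end
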